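/- arXiv:2203.14364 — 11 statements merged into one kernel-verified Lean document; each statement's English description precedes it below -/
import Mathlib

section
/- For real numbers 0 < α < β and t ∈ (0, π/β), the function g(t) = sin(αt)/sin(βt) is monotone increasing on (0, π/β). -/
/-!
The derivative of `sin (α t) / sin (β t)` is `N t / sin (β t) ^ 2` with
`N t = α cos (α t) sin (β t) - β sin (α t) cos (β t)`. Since `N 0 = 0` and
`N' t = (β ^ 2 - α ^ 2) sin (α t) sin (β t) > 0` on `(0, π / β)`, the numerator `N` is positive there.
-/

open Real Set

lemma hasDerivAt_sin_const_mul (c t : ℝ) :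
    HasDerivAt (fun x => sin (c * x)) (cos (c * t) * c) t := by
  simpa using ((hasDerivAt_id t).const_mul c).sin

lemma hasDerivAt_cos_const_mul (c t : ℝ) :
    HasDerivAt (fun x => cos (c * x)) (-sin (c * t) * c) t := by
  simpa using ((hasDerivAt_id t).const_mul c).cos

lemma sin_const_mul_pos {c β t : ℝ} (hc : 0 < c) (hcβ : c ≤ β) (ht : t ∈ Ioo 0 (π / β)) :
    0 < sin (c * t) := by
  have hβ : 0 < β := hc.trans_le hcβ
  apply sin_pos_of_pos_of_lt_pi (mul_pos hc ht.1)
  calc c * t ≤ β * t := mul_le_mul_of_nonneg_right hcβ ht.1.le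
    _ < β * (π / β) := mul_lt_mul_of_pos_left ht.2 hβ
    _ = π := by field_simp

noncomputable def sinRatioDerivNum (α β t : ℝ) : ℝ :=
  α * cos (α * t) * sin (β * t) - β * sin (α * t) * cos (β * t)

lemma hasDerivAt_sinRatioDerivNum (α β t : ℝ) :
    HasDerivAt (sinRatioDerivNum α β) ((β ^ 2 - α ^ 2) * (sin (α * t) * sin (β * t))) t := by
  have := (((hasDerivAt_cos_const_mul α t).const_mul α).mul (hasDerivAt_sin_const_mul β t)).sub
    (((hasDerivAt_sin_const_mul α t).const_mul β).mul (hasDerivAt_cos_const_mul β t))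
  exact this.congr_deriv (by ring)

lemma hasDerivAt_sin_div_sin (α β t : ℝ) (h : sin (β * t) ≠ 0) :
    HasDerivAt (fun x => sin (α * x) / sin (β * x))
      (sinRatioDerivNum α β t / sin (β * t) ^ 2) t := by
  have := (hasDerivAt_sin_const_mul α t).div (hasDerivAt_sin_const_mul β t) h
  exact this.congr_deriv (by unfold sinRatioDerivNum; ring)

lemma sinRatioDerivNum_pos {α β t : ℝ} (hα : 0 < α) (hαβ : α < β) (ht : t ∈ Ioo 0 (π / β)) :
    0 < sinRatioDerivNum α β t := by
  have hπβ : 0 < π / β := div_pos pi_pos (hα.trans hαβ)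
  have hmono : StrictMonoOn (sinRatioDerivNum α β) (Icc 0 (π / β)) := by
    refine strictMonoOn_of_deriv_pos (convex_Icc _ _)
      (fun x _ => (hasDerivAt_sinRatioDerivNum α β x).continuousAt.continuousWithinAt) ?_
    intro x hx
    rw [interior_Icc] at hx
    rw [(hasDerivAt_sinRatioDerivNum α β x).deriv]
    have hsq : 0 < β ^ 2 - α ^ 2 := by nlinarith
    exact mul_pos hsq (mul_pos (sin_const_mul_pos hα hαβ.le hx)
      (sin_const_mul_pos (hα.trans hαβ) le_rfl hx))
  have hzero : sinRatioDerivNum α β 0 = 0 := by simp [sinRatioDerivNum]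
  simpa [hzero] using hmono (left_mem_Icc.2 hπβ.le) (Ioo_subset_Icc_self ht) ht.1

theorem stmt_0 (α β : ℝ) (hα : 0 < α) (hαβ : α < β) :
    MonotoneOn (fun t : ℝ => Real.sin (α * t) / Real.sin (β * t))
      (Set.Ioo 0 (Real.pi / β)) := by
  have hsinβ : ∀ t ∈ Ioo 0 (π / β), 0 < sin (β * t) :=
    fun t ht => sin_const_mul_pos (hα.trans hαβ) le_rfl ht
  refine StrictMonoOn.monotoneOn (strictMonoOn_of_deriv_pos (convex_Ioo _ _) ?_ ?_)
  · exact fun t ht => (hasDerivAt_sin_div_sin α β t (hsinβ t ht).ne').continuousAt.continuousWithinAt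
  · intro t ht
    rw [interior_Ioo] at ht
    rw [(hasDerivAt_sin_div_sin α β t (hsinβ t ht).ne').deriv]
    exact div_pos (sinRatioDerivNum_pos hα hαβ ht) (pow_pos (hsinβ t ht) 2)
end

section
/- For all real s ≥ 2, the function y ↦ (cosh y · sinh(sy/2)) / (sinh y · cosh(sy/2)) is monotone decreasing on (0, ∞); equivalently its derivative (s·sinh(2y) − 2·sinh(sy)) / (4·sinh²y·cosh²(sy/2)) is ≤ 0, i.e. s·sinh(2y) ≤ 2·sinh(sy) for s ≥ 2, y ≥ 0. -/
open Real

lemma key_ineq (s : ℝ) (hs : 2 ≤ s) : ∀ y : ℝ, 0 ≤ y →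
    s * Real.sinh (2 * y) ≤ 2 * Real.sinh (s * y) := by
  intro y hy
  set g : ℝ → ℝ := fun y => 2 * Real.sinh (s * y) - s * Real.sinh (2 * y) with hg
  have hderiv : ∀ x : ℝ, HasDerivAt g (2 * (Real.cosh (s * x) * s) - s * (Real.cosh (2 * x) * 2)) x := by
    intro x
    have h1 : HasDerivAt (fun y : ℝ => Real.sinh (s * y)) (Real.cosh (s * x) * s) x := by
      have := (Real.hasDerivAt_sinh (s * x)).comp x ((hasDerivAt_id x).const_mul s)
      simpa [Function.comp_def] using this
    have h2 : HasDerivAt (fun y : ℝ => Real.sinh (2 * y)) (Real.cosh (2 * x) * 2) x := by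
      have := (Real.hasDerivAt_sinh (2 * x)).comp x ((hasDerivAt_id x).const_mul (2:ℝ))
      simpa [Function.comp_def] using this
    exact (h1.const_mul 2).sub (h2.const_mul s)
  have hmono : MonotoneOn g (Set.Ici (0:ℝ)) := by
    apply monotoneOn_of_deriv_nonneg (convex_Ici 0)
    · exact fun x _ => ((hderiv x).continuousAt).continuousWithinAt
    · intro x _
      exact ((hderiv x).differentiableAt).differentiableWithinAt
    · intro x hx
      rw [interior_Ici] at hx
      rw [(hderiv x).deriv]
      have hx' : (0:ℝ) < x := hx
      have hcc : Real.cosh (2 * x) ≤ Real.cosh (s * x) := by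
        rw [Real.cosh_le_cosh]
        rw [abs_of_nonneg (by positivity), abs_of_nonneg (by nlinarith)]
        nlinarith
      nlinarith
  have h0 : g 0 = 0 := by simp [hg]
  have := hmono (Set.self_mem_Ici) hy hy
  rw [h0] at this
  simp only [hg] at this
  linarith

theorem stmt_3 (s : ℝ) (hs : 2 ≤ s) :
    AntitoneOn (fun y : ℝ => Real.cosh y * Real.sinh (s * y / 2) /
        (Real.sinh y * Real.cosh (s * y / 2))) (Set.Ioi 0) ∧
    ∀ y : ℝ, 0 ≤ y → s * Real.sinh (2 * y) ≤ 2 * Real.sinh (s * y) := by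
  have key := key_ineq s hs
  refine ⟨?_, key⟩
  have hD0 : ∀ y : ℝ, 0 < y → Real.sinh y * Real.cosh (s * y / 2) ≠ 0 := by
    intro y hy
    have h1 : 0 < Real.sinh y := Real.sinh_pos_iff.mpr hy
    have h2 : 0 < Real.cosh (s * y / 2) := Real.cosh_pos (s * y / 2)
    positivity
  have hder : ∀ y : ℝ, 0 < y →
      HasDerivAt (fun y : ℝ => Real.cosh y * Real.sinh (s * y / 2) /
        (Real.sinh y * Real.cosh (s * y / 2)))
      (((Real.sinh y * Real.sinh (s * y / 2) + Real.cosh y * (Real.cosh (s * y / 2) * (s / 2))) *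
          (Real.sinh y * Real.cosh (s * y / 2)) -
        Real.cosh y * Real.sinh (s * y / 2) *
          (Real.cosh y * Real.cosh (s * y / 2) + Real.sinh y * (Real.sinh (s * y / 2) * (s / 2)))) /
        (Real.sinh y * Real.cosh (s * y / 2)) ^ 2) y := by
    intro y hy
    have hlin : HasDerivAt (fun y : ℝ => s * y / 2) (s / 2) y := by
      simpa using ((hasDerivAt_id y).const_mul s).div_const 2
    have hsa : HasDerivAt (fun y : ℝ => Real.sinh (s * y / 2))
        (Real.cosh (s * y / 2) * (s / 2)) y :=
      hlin.sinh
    have hca : HasDerivAt (fun y : ℝ => Real.cosh (s * y / 2))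
        (Real.sinh (s * y / 2) * (s / 2)) y :=
      hlin.cosh
    have hN : HasDerivAt (fun y : ℝ => Real.cosh y * Real.sinh (s * y / 2))
        (Real.sinh y * Real.sinh (s * y / 2) + Real.cosh y * (Real.cosh (s * y / 2) * (s / 2))) y :=
      (Real.hasDerivAt_cosh y).mul hsa
    have hDd : HasDerivAt (fun y : ℝ => Real.sinh y * Real.cosh (s * y / 2))
        (Real.cosh y * Real.cosh (s * y / 2) + Real.sinh y * (Real.sinh (s * y / 2) * (s / 2))) y :=
      (Real.hasDerivAt_sinh y).mul hca
    exact hN.div hDd (hD0 y hy)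
  apply antitoneOn_of_deriv_nonpos (convex_Ioi 0)
  · intro y hy
    exact ((hder y hy).continuousAt).continuousWithinAt
  · intro y hy
    rw [interior_Ioi] at hy
    exact ((hder y hy).differentiableAt).differentiableWithinAt
  · intro y hy
    rw [interior_Ioi] at hy
    rw [(hder y hy).deriv]
    apply div_nonpos_of_nonpos_of_nonneg _ (sq_nonneg _)
    have hk := key y (le_of_lt hy)
    have h2y : Real.sinh (2 * y) = 2 * Real.sinh y * Real.cosh y := Real.sinh_two_mul y
    have hsy : Real.sinh (s * y) = 2 * Real.sinh (s * y / 2) * Real.cosh (s * y / 2) := by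
      have h := Real.sinh_two_mul (s * y / 2)
      rw [show 2 * (s * y / 2) = s * y by ring] at h
      exact h
    have hc1 : Real.cosh y ^ 2 = Real.sinh y ^ 2 + 1 := Real.cosh_sq y
    have hc2 : Real.cosh (s * y / 2) ^ 2 = Real.sinh (s * y / 2) ^ 2 + 1 := Real.cosh_sq _
    have hnum : (Real.sinh y * Real.sinh (s * y / 2) + Real.cosh y * (Real.cosh (s * y / 2) * (s / 2))) *
          (Real.sinh y * Real.cosh (s * y / 2)) -
        Real.cosh y * Real.sinh (s * y / 2) *
          (Real.cosh y * Real.cosh (s * y / 2) + Real.sinh y * (Real.sinh (s * y / 2) * (s / 2))) =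
        -(Real.sinh (s * y / 2) * Real.cosh (s * y / 2)) + s / 2 * (Real.sinh y * Real.cosh y) := by
      linear_combination (-(Real.sinh (s * y / 2) * Real.cosh (s * y / 2))) * hc1 +
        (s / 2 * Real.sinh y * Real.cosh y) * hc2
    rw [h2y, hsy] at hk
    rw [hnum]
    linarith
end

section
/- Let p ≥ 2, s > 0, and K(y) = cosh^{p/s}(sy/2) / (cosh y − cos(π/p))^{p/2} for y ≥ 0. If s ≤ 1/sin²(π/(2p)), then K attains its maximum over [0,∞) at y = 0, with maximum value K(0) = (1 − cos(π/p))^{−p/2}. -/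
open Real


-- tanh monotone
lemma aux_tanh_mono {c a : ℝ} (h : c ≤ a) : Real.tanh c ≤ Real.tanh a := by
  rw [Real.tanh_eq_sinh_div_cosh, Real.tanh_eq_sinh_div_cosh,
    div_le_div_iff₀ (Real.cosh_pos c) (Real.cosh_pos a)]
  nlinarith [Real.sinh_sub a c, Real.sinh_nonneg_iff.2 (sub_nonneg.2 h)]

-- sinh x ≤ x * cosh x for x ≥ 0
lemma aux_sinh_le {x : ℝ} (hx : 0 ≤ x) : Real.sinh x ≤ x * Real.cosh x := by
  have key : MonotoneOn (fun x => x * Real.cosh x - Real.sinh x) (Set.Ici 0) := by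
    apply monotoneOn_of_deriv_nonneg (convex_Ici 0)
    · fun_prop
    · fun_prop
    · intro z hz
      rw [interior_Ici] at hz
      have hd : HasDerivAt (fun x => x * Real.cosh x - Real.sinh x) (z * Real.sinh z) z := by
        have := ((hasDerivAt_id z).mul (Real.hasDerivAt_cosh z)).sub (Real.hasDerivAt_sinh z)
        exact this.congr_deriv (by simp only [id, one_mul]; ring)
      rw [hd.deriv]
      exact mul_nonneg hz.le (Real.sinh_nonneg_iff.2 hz.le)
  have := key Set.self_mem_Ici hx hx
  simpa using this





lemma aux_ratio {c a : ℝ} (hc : 0 ≤ c) (h : c ≤ a) : a * Real.sinh c ≤ c * Real.sinh a := by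
  set d := a - c with hd
  have hd0 : 0 ≤ d := sub_nonneg.2 h
  have h1 : Real.sinh a = Real.sinh c * Real.cosh d + Real.cosh c * Real.sinh d := by
    rw [show a = c + d by ring, Real.sinh_add]
  have h2 : d ≤ Real.sinh d := Real.self_le_sinh_iff.2 hd0
  have h3 : Real.sinh c ≤ c * Real.cosh c := aux_sinh_le hc
  have h4 : (1:ℝ) ≤ Real.cosh d := Real.one_le_cosh d
  have h5 : 0 ≤ Real.sinh c := Real.sinh_nonneg_iff.2 hc
  have h6 : 0 ≤ Real.sinh d := Real.sinh_nonneg_iff.2 hd0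
  have h7 : a = c + d := by ring
  nlinarith [mul_le_mul_of_nonneg_left h2 h5, mul_le_mul_of_nonneg_right h3 h6,
    mul_le_mul_of_nonneg_left h4 (mul_nonneg hc h5)]

lemma aux_cosh_rpow {b x : ℝ} (hb : 1 ≤ b) (hx : 0 ≤ x) :
    Real.cosh x ^ b ≤ Real.cosh (b * x) := by
  have hb0 : 0 < b := lt_of_lt_of_le one_pos hb
  have hmono : MonotoneOn (fun x => Real.log (Real.cosh (b*x)) - b * Real.log (Real.cosh x))
      (Set.Ici 0) := by
    apply monotoneOn_of_deriv_nonneg (convex_Ici 0)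
    · fun_prop (disch := intro z; exact (Real.cosh_pos _).ne')
    · fun_prop (disch := intro z; exact (Real.cosh_pos _).ne')
    · intro z hz
      rw [interior_Ici] at hz
      have d1 : HasDerivAt (fun x : ℝ => b * x) b z := by
        simpa using (hasDerivAt_id z).const_mul b
      have d0 : HasDerivAt (fun x => Real.cosh (b*x)) (Real.sinh (b*z) * b) z :=
        (Real.hasDerivAt_cosh (b*z)).comp z d1
      have d2 : HasDerivAt (fun x => Real.log (Real.cosh (b*x)))
          (Real.sinh (b*z) * b / Real.cosh (b*z)) z := d0.log (Real.cosh_pos _).ne'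
      have d3 : HasDerivAt (fun x => b * Real.log (Real.cosh x))
          (b * (Real.sinh z / Real.cosh z)) z :=
        ((Real.hasDerivAt_cosh z).log (Real.cosh_pos _).ne').const_mul b
      have hd := d2.sub d3
      erw [hd.deriv]
      have hz' : (0:ℝ) < z := hz
      have ht : Real.tanh z ≤ Real.tanh (b * z) := aux_tanh_mono (by nlinarith)
      rw [Real.tanh_eq_sinh_div_cosh, Real.tanh_eq_sinh_div_cosh] at ht
      have h2 := mul_le_mul_of_nonneg_left ht hb0.le
      have heq : b * (Real.sinh (b*z) / Real.cosh (b*z))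
          = Real.sinh (b*z) * b / Real.cosh (b*z) := by ring
      linarith
  have hineq := hmono Set.self_mem_Ici hx hx
  simp only [mul_zero, Real.cosh_zero, Real.log_one, sub_zero, mul_zero, sub_self] at hineq
  -- hineq : 0 ≤ log (cosh (b*x)) - b * log (cosh x)
  have h1 : b * Real.log (Real.cosh x) ≤ Real.log (Real.cosh (b*x)) := by linarith
  calc Real.cosh x ^ b = Real.exp (Real.log (Real.cosh x) * b) := by
        rw [Real.rpow_def_of_pos (Real.cosh_pos x)]
      _ ≤ Real.exp (Real.log (Real.cosh (b*x))) := Real.exp_le_exp.2 (by linarith)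
      _ = Real.cosh (b*x) := Real.exp_log (Real.cosh_pos _)




lemma aux_key {s y : ℝ} (hs : 2 ≤ s) (hy : 0 ≤ y) :
    Real.cosh (s * y / 2) ^ (2 / s) ≤ 1 + s * Real.sinh (y / 2) ^ 2 := by
  have hs0 : (0:ℝ) < s := by linarith
  have hD : ∀ z : ℝ, (0:ℝ) < 1 + s * Real.sinh (z / 2) ^ 2 := fun z => by positivity
  have hmono : MonotoneOn
      (fun z => Real.log (1 + s * Real.sinh (z / 2) ^ 2)
        - (2 / s) * Real.log (Real.cosh (s * z / 2))) (Set.Ici 0) := by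
    apply monotoneOn_of_deriv_nonneg (convex_Ici 0)
    · fun_prop (disch := intro z; first | exact (hD z).ne' | exact (Real.cosh_pos _).ne')
    · fun_prop (disch := intro z; first | exact (hD z).ne' | exact (Real.cosh_pos _).ne')
    · intro z hz
      rw [interior_Ici] at hz
      have hz' : (0:ℝ) < z := hz
      set u := z / 2 with hu
      set a := s * z / 2 with ha
      -- derivative computation
      have dhalf : HasDerivAt (fun y : ℝ => y / 2) (1/2) z := (hasDerivAt_id z).div_const 2
      have dsinh : HasDerivAt (fun y : ℝ => Real.sinh (y/2)) (Real.cosh u * (1/2)) z := by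
        have := (Real.hasDerivAt_sinh u).comp z dhalf; exact this
      have dsq : HasDerivAt (fun y : ℝ => Real.sinh (y/2) ^ 2)
          ((2:ℕ) * Real.sinh u ^ 1 * (Real.cosh u * (1/2))) z := dsinh.pow 2
      have dD : HasDerivAt (fun y : ℝ => 1 + s * Real.sinh (y/2) ^ 2)
          (s * ((2:ℕ) * Real.sinh u ^ 1 * (Real.cosh u * (1/2)))) z :=
        (dsq.const_mul s).const_add 1
      have dlogD := dD.log (hD z).ne'
      have dsy : HasDerivAt (fun y : ℝ => s * y / 2) (s / 2) z := by
        simpa using ((hasDerivAt_id z).const_mul s).div_const 2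
      have dcoshA : HasDerivAt (fun y : ℝ => Real.cosh (s * y / 2))
          (Real.sinh a * (s/2)) z := by
            have := (Real.hasDerivAt_cosh a).comp z dsy; exact this
      have dlogA := (dcoshA.log (Real.cosh_pos a).ne').const_mul (2/s)
      have dtot := dlogD.sub dlogA
      erw [dtot.deriv]
      -- key inequality
      have hu0 : 0 < u := by positivity
      have hc : (0:ℝ) ≤ (s - 2) * u := mul_nonneg (by linarith) hu0.le
      have hca : (s - 2) * u ≤ s * u := by nlinarith
      have hr := aux_ratio hc hca
      have hr2 : s * Real.sinh ((s-2)*u) ≤ (s - 2) * Real.sinh (s*u) := by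
        have h2 := mul_le_mul_of_nonneg_left hr (le_of_lt (inv_pos.2 hu0))
        rw [mul_comm] at h2
        calc s * Real.sinh ((s-2)*u) = u⁻¹ * (s * u * Real.sinh ((s-2)*u)) := by field_simp
          _ ≤ u⁻¹ * ((s-2)*u * Real.sinh (s*u)) := by
              apply mul_le_mul_of_nonneg_left _ (le_of_lt (inv_pos.2 hu0))
              convert hr using 2 <;> ring
          _ = (s - 2) * Real.sinh (s*u) := by field_simp
      have hsub : Real.sinh (s*u - 2*u)
          = Real.sinh (s*u) * Real.cosh (2*u) - Real.cosh (s*u) * Real.sinh (2*u) :=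
        Real.sinh_sub _ _
      have hcosh2 : Real.cosh (2*u) = 1 + 2 * Real.sinh u ^ 2 := by
        rw [Real.cosh_two_mul, Real.cosh_sq]; ring
      have hsinh2 : Real.sinh (2*u) = 2 * Real.sinh u * Real.cosh u := Real.sinh_two_mul u
      have hae : a = s * u := by rw [ha, hu]; ring
      have hkey : Real.sinh a * (1 + s * Real.sinh u ^ 2)
          ≤ s * Real.sinh u * Real.cosh u * Real.cosh a := by
        rw [hae]
        have he : (s-2)*u = s*u - 2*u := by ring
        rw [he] at hr2
        rw [hsub, hcosh2, hsinh2] at hr2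
        nlinarith [hr2]
      -- conclude derivative nonneg
      have hfrac : Real.sinh a / Real.cosh a
          ≤ s * Real.sinh u * Real.cosh u / (1 + s * Real.sinh u ^ 2) := by
        rw [div_le_div_iff₀ (Real.cosh_pos a) (hD z)]
        calc Real.sinh a * (1 + s * Real.sinh (z/2) ^ 2)
            = Real.sinh a * (1 + s * Real.sinh u ^ 2) := by rw [hu]
          _ ≤ s * Real.sinh u * Real.cosh u * Real.cosh a := hkey
      have e1 : s * ((2:ℕ) * Real.sinh u ^ 1 * (Real.cosh u * (1/2))) / (1 + s * Real.sinh (z/2) ^ 2)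
          = s * Real.sinh u * Real.cosh u / (1 + s * Real.sinh u ^ 2) := by
        rw [hu]; push_cast; ring_nf
      have e2 : 2 / s * (Real.sinh a * (s/2) / Real.cosh a) = Real.sinh a / Real.cosh a := by
        field_simp
      rw [e1, e2]
      linarith
  have h0 := hmono Set.self_mem_Ici hy hy
  simp only [zero_div, Real.sinh_zero, mul_zero, zero_pow, ne_eq, OfNat.ofNat_ne_zero,
    not_false_eq_true, add_zero, Real.log_one, Real.cosh_zero, sub_zero] at h0
  -- h0 : 0 ≤ log D - (2/s) * log cosh(sy/2)
  have h1 : (2/s) * Real.log (Real.cosh (s*y/2)) ≤ Real.log (1 + s * Real.sinh (y/2)^2) := by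
    have : Real.log (1 + s * (0:ℝ)) - 2 / s * Real.log 1 = 0 := by simp
    linarith [h0]
  calc Real.cosh (s*y/2) ^ (2/s) = Real.exp (Real.log (Real.cosh (s*y/2)) * (2/s)) := by
        rw [Real.rpow_def_of_pos (Real.cosh_pos _)]
      _ ≤ Real.exp (Real.log (1 + s * Real.sinh (y/2)^2)) := Real.exp_le_exp.2 (by linarith)
      _ = 1 + s * Real.sinh (y/2)^2 := Real.exp_log (hD y)




theorem stmt_5 (p s : ℝ) (hp : 2 ≤ p) (hs0 : 0 < s)
    (hs : s ≤ 1 / Real.sin (Real.pi / (2 * p)) ^ 2)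
    (K : ℝ → ℝ)
    (hK : ∀ y : ℝ, K y =
      Real.cosh (s * y / 2) ^ (p / s) / (Real.cosh y - Real.cos (Real.pi / p)) ^ (p / 2)) :
    (∀ y : ℝ, 0 ≤ y → K y ≤ K 0) ∧
      K 0 = (1 - Real.cos (Real.pi / p)) ^ (-(p / 2)) := by
  have hp0 : (0:ℝ) < p := by linarith
  set q := Real.sin (Real.pi / (2 * p)) with hqdef
  have hpi := Real.pi_pos
  have hql : 0 < Real.pi / (2 * p) := by positivity
  have hqu : Real.pi / (2 * p) ≤ Real.pi / 4 := by
    apply div_le_div_of_nonneg_left hpi.le (by norm_num) (by linarith)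
  have hq : 0 < q := Real.sin_pos_of_pos_of_lt_pi hql (by nlinarith [Real.pi_pos])
  -- q ≤ sin (π/4)
  have hq4 : q ≤ Real.sin (Real.pi / 4) := by
    apply Real.strictMonoOn_sin.monotoneOn _ _ hqu
    · constructor <;> nlinarith
    · constructor <;> nlinarith
  have hsqrt2 : Real.sin (Real.pi / 4) = Real.sqrt 2 / 2 := Real.sin_pi_div_four
  have hq2 : q ^ 2 ≤ 1 / 2 := by
    rw [hsqrt2] at hq4
    nlinarith [Real.sq_sqrt (by norm_num : (0:ℝ) ≤ 2), hq]
  have hsig : (2:ℝ) ≤ 1 / q ^ 2 := by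
    rw [le_div_iff₀ (by positivity)]; linarith
  -- identity 1 - cos(π/p) = 2 q^2
  have hid : 1 - Real.cos (Real.pi / p) = 2 * q ^ 2 := by
    have h := Real.sin_sq_eq_half_sub (Real.pi / (2 * p))
    rw [show 2 * (Real.pi / (2 * p)) = Real.pi / p by field_simp] at h
    rw [hqdef]; linarith
  have h1c : 0 < 1 - Real.cos (Real.pi / p) := by
    rw [hid]; have := pow_pos hq 2; linarith
  -- value at 0
  have hK0 : K 0 = 1 / (1 - Real.cos (Real.pi / p)) ^ (p / 2) := by
    rw [hK 0]
    norm_num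
  constructor
  · intro y hy
    -- cosh y identity
    have hcy : Real.cosh y = 1 + 2 * Real.sinh (y/2) ^ 2 := by
      have h := Real.cosh_two_mul (y/2)
      have h2 := Real.cosh_sq (y/2)
      rw [show 2 * (y/2) = y by ring] at h
      linarith
    have hsh2 : (0:ℝ) ≤ Real.sinh (y/2) ^ 2 := sq_nonneg _
    -- step A
    have hA : Real.cosh (s * y / 2) ^ (2 / s) ≤ 1 + (1 / q ^ 2) * Real.sinh (y/2) ^ 2 := by
      rcases le_or_gt s 2 with hle | hgt
      · have hb : (1:ℝ) ≤ 2 / s := by rw [le_div_iff₀ hs0]; linarith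
        have hx : (0:ℝ) ≤ s * y / 2 := by positivity
        have h := aux_cosh_rpow hb hx
        rw [show 2 / s * (s * y / 2) = y by field_simp] at h
        rw [hcy] at h
        have : 2 * Real.sinh (y/2)^2 ≤ (1/q^2) * Real.sinh (y/2)^2 :=
          mul_le_mul_of_nonneg_right hsig hsh2
        linarith
      · have h := aux_key hgt.le hy
        have : s * Real.sinh (y/2)^2 ≤ (1/q^2) * Real.sinh (y/2)^2 :=
          mul_le_mul_of_nonneg_right hs hsh2
        linarith
    -- step B: rewrite RHS
    have hdenom : Real.cosh y - Real.cos (Real.pi / p) = 2 * Real.sinh (y/2)^2 + 2 * q^2 := by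
      rw [hcy]; linarith
    have hdpos : 0 < Real.cosh y - Real.cos (Real.pi / p) := by rw [hdenom]; positivity
    have hB : 1 + (1 / q ^ 2) * Real.sinh (y/2) ^ 2
        = (Real.cosh y - Real.cos (Real.pi / p)) / (1 - Real.cos (Real.pi / p)) := by
      rw [hdenom, hid]
      field_simp
      ring
    rw [hB] at hA
    -- raise to power p/2
    have hp2 : (0:ℝ) ≤ p / 2 := by linarith
    have hrp := Real.rpow_le_rpow (Real.rpow_nonneg (Real.cosh_pos _).le _) hA hp2
    rw [← Real.rpow_mul (Real.cosh_pos _).le,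
      show 2 / s * (p / 2) = p / s by field_simp,
      Real.div_rpow hdpos.le h1c.le] at hrp
    -- conclude
    rw [hK y, hK0]
    have hDp : 0 < (Real.cosh y - Real.cos (Real.pi / p)) ^ (p / 2) :=
      Real.rpow_pos_of_pos hdpos _
    have hCp : 0 < (1 - Real.cos (Real.pi / p)) ^ (p / 2) :=
      Real.rpow_pos_of_pos h1c _
    rw [div_le_div_iff₀ hDp hCp]
    calc Real.cosh (s * y / 2) ^ (p / s) * (1 - Real.cos (Real.pi / p)) ^ (p / 2)
        ≤ ((Real.cosh y - Real.cos (Real.pi / p)) ^ (p/2) / (1 - Real.cos (Real.pi / p)) ^ (p/2))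
            * (1 - Real.cos (Real.pi / p)) ^ (p / 2) :=
          mul_le_mul_of_nonneg_right hrp hCp.le
      _ = 1 * (Real.cosh y - Real.cos (Real.pi / p)) ^ (p / 2) := by
          field_simp
  · rw [hK0, Real.rpow_neg h1c.le, one_div]
end

section
/- Let 2 ≤ p ≤ 3 and s with 2 ≤ s ≤ 4 and s ≥ p. Then for every integer k ≥ 1, (p/4)·(s−2)^{2k+1} + (1 − p/4)·s^{2k+1} + (p/4 − s/2)·2^{2k+1} ≥ 0. -/
lemma slope_aux (u : ℝ) (hu : 1 ≤ u) (n : ℕ) (hn : 1 ≤ n) :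
    (u - 1) ^ n + 1 ≤ u ^ n := by
  have h := pow_add_pow_le (x := u - 1) (y := 1) (by linarith) (by norm_num)
    (by omega : n ≠ 0)
  simpa using h

lemma caseA_aux (u : ℝ) (hu1 : 1 ≤ u) (hu2 : u ≤ 3/2) (n : ℕ) (hn : 3 ≤ n) :
    0 ≤ (u - 1) ^ n + (2 - u) * u ^ (n - 1) - 1 := by
  have hv0 : (0:ℝ) ≤ u - 1 := by linarith
  have hb : 1 + ((n - 1 : ℕ) : ℝ) * (u - 1) ≤ (1 + (u - 1)) ^ (n - 1) :=
    one_add_mul_le_pow (by linarith) (n - 1)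
  have hcast : ((n - 1 : ℕ) : ℝ) = (n : ℝ) - 1 := by
    have h1 : 1 ≤ n := by omega
    push_cast [Nat.cast_sub h1]; ring
  rw [hcast] at hb
  have hu' : (1 : ℝ) + (u - 1) = u := by ring
  rw [hu'] at hb
  have hn3 : (3 : ℝ) ≤ (n : ℝ) := by exact_mod_cast hn
  have hvn : 0 ≤ (u - 1) ^ n := pow_nonneg hv0 n
  have h2u : (0:ℝ) ≤ 2 - u := by linarith
  have hmul : (2 - u) * (1 + ((n:ℝ) - 1) * (u - 1)) ≤ (2 - u) * u ^ (n - 1) :=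
    mul_le_mul_of_nonneg_left hb h2u
  -- (2-u)*(1+(n-1)(u-1)) - 1 = (n-2)(u-1) - (n-1)(u-1)^2 ≥ 0
  have hkey : 0 ≤ (2 - u) * (1 + ((n:ℝ) - 1) * (u - 1)) - 1 := by
    have hfac : 0 ≤ (u - 1) * (((n:ℝ) - 2) - ((n:ℝ) - 1) * (u - 1)) := by
      apply mul_nonneg hv0
      nlinarith
    nlinarith
  linarith

lemma key_aux (q u : ℝ) (hq2 : q ≤ 3/4) (hqu : 2 * q ≤ u) (hu1 : 1 ≤ u)
    (hu2 : u ≤ 2) (n : ℕ) (hn : 3 ≤ n) :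
    0 ≤ q * (u - 1) ^ n + (1 - q) * u ^ n + q - u := by
  have hs := slope_aux u hu1 n (by omega)
  have hpow : u ^ n = u * u ^ (n - 1) := by
    conv_lhs => rw [← Nat.sub_add_cancel (show 1 ≤ n by omega)]
    rw [pow_succ]; ring
  by_cases hc : u ≤ 3/2
  · have hA := caseA_aux u hu1 hc n hn
    have hslope : 0 ≤ (q - u/2) * ((u - 1) ^ n - u ^ n + 1) := by
      have heq : (q - u/2) * ((u - 1) ^ n - u ^ n + 1) =
          (u/2 - q) * (u ^ n - ((u - 1) ^ n + 1)) := by ring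
      rw [heq]
      exact mul_nonneg (by linarith) (by linarith)
    have hB : 0 ≤ (u/2) * ((u - 1) ^ n + (2 - u) * u ^ (n - 1) - 1) :=
      mul_nonneg (by linarith) hA
    have hid : q * (u - 1) ^ n + (1 - q) * u ^ n + q - u =
        (u/2) * ((u - 1) ^ n + (2 - u) * u ^ (n - 1) - 1) +
        (q - u/2) * ((u - 1) ^ n - u ^ n + 1) := by
      rw [hpow]; ring
    linarith [hid ▸ add_nonneg hB hslope]
  · have hcube : u ^ 3 ≤ u ^ n := pow_le_pow_right₀ hu1 hn
    have h0 : 0 ≤ (u - 1) ^ n := pow_nonneg (by linarith) n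
    have hslope : 0 ≤ (q - 3/4) * ((u - 1) ^ n - u ^ n + 1) := by
      have heq : (q - 3/4) * ((u - 1) ^ n - u ^ n + 1) =
          (3/4 - q) * (u ^ n - ((u - 1) ^ n + 1)) := by ring
      rw [heq]
      exact mul_nonneg (by linarith) (by linarith)
    have hx : (0:ℝ) ≤ u ^ 2 + u - 3 := by nlinarith [sq_nonneg (u - 3/2)]
    have hcub : 0 ≤ (1/4) * u ^ 3 + 3/4 - u := by
      nlinarith [mul_nonneg (show (0:ℝ) ≤ u - 1 by linarith) hx]
    have hid : q * (u - 1) ^ n + (1 - q) * u ^ n + q - u =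
        ((3/4) * (u - 1) ^ n + (1/4) * u ^ n + 3/4 - u) +
        (q - 3/4) * ((u - 1) ^ n - u ^ n + 1) := by ring
    rw [hid]
    have : 0 ≤ (3/4) * (u - 1) ^ n + (1/4) * u ^ n + 3/4 - u := by linarith
    linarith

theorem stmt_8 (p s : ℝ) (hp2 : 2 ≤ p) (hp3 : p ≤ 3) (hs2 : 2 ≤ s) (hs4 : s ≤ 4)
    (hps : p ≤ s) (k : ℕ) (hk : 1 ≤ k) :
    0 ≤ (p / 4) * (s - 2) ^ (2 * k + 1) + (1 - p / 4) * s ^ (2 * k + 1) +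
      (p / 4 - s / 2) * 2 ^ (2 * k + 1) := by
  set n := 2 * k + 1 with hn
  have hkey := key_aux (p/4) (s/2) (by linarith) (by linarith) (by linarith)
    (by linarith) n (by omega)
  have h2 : (s - 2) ^ n = 2 ^ n * (s/2 - 1) ^ n := by
    rw [← mul_pow]; ring_nf
  have h3 : s ^ n = 2 ^ n * (s/2) ^ n := by
    rw [← mul_pow]; ring_nf
  have hmain : 0 ≤ (2:ℝ) ^ n * ((p/4) * (s/2 - 1) ^ n + (1 - p/4) * (s/2) ^ n + p/4 - s/2) :=
    mul_nonneg (pow_nonneg (by norm_num) n) hkey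
  calc (0:ℝ) ≤ 2 ^ n * ((p/4) * (s/2 - 1) ^ n + (1 - p/4) * (s/2) ^ n + p/4 - s/2) := hmain
    _ = (p / 4) * (s - 2) ^ n + (1 - p / 4) * s ^ n + (p / 4 - s / 2) * 2 ^ n := by
        rw [h2, h3]; ring
end

section
/- Let 3 ≤ p ≤ 4 and s ≥ 4 with s ≥ p. Then for every integer k ≥ 1, (p/4)·(s−2)^{2k+1} + (1 − p/4)·s^{2k+1} + (p/4 − s/2)·2^{2k+1} ≥ 0. -/
theorem stmt_9 (p s : ℝ) (hp3 : 3 ≤ p) (hp4 : p ≤ 4) (hs4 : 4 ≤ s)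
    (hps : p ≤ s) (k : ℕ) (hk : 1 ≤ k) :
    0 ≤ (p / 4) * (s - 2) ^ (2 * k + 1) + (1 - p / 4) * s ^ (2 * k + 1) +
      (p / 4 - s / 2) * 2 ^ (2 * k + 1) := by
  have h1 : (s - 2) ^ (2 * k + 1) + 2 ^ (2 * k + 1) ≤ s ^ (2 * k + 1) := by
    have := pow_add_pow_le (show (0:ℝ) ≤ s - 2 by linarith)
      (show (0:ℝ) ≤ 2 by norm_num) (show 2 * k + 1 ≠ 0 by omega)
    simpa using this
  have h2 : (2:ℝ) ^ (2 * k) ≤ (s - 2) ^ (2 * k) :=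
    pow_le_pow_left₀ (by norm_num) (by linarith) _
  have hA : (s - 2) ^ (2 * k + 1) = (s - 2) * (s - 2) ^ (2 * k) := by ring
  have hT : (2:ℝ) ^ (2 * k + 1) = 2 * 2 ^ (2 * k) := by ring
  have hpos : (0:ℝ) < 2 ^ (2 * k) := by positivity
  nlinarith [mul_le_mul_of_nonneg_left h1 (show (0:ℝ) ≤ 1 - p / 4 by linarith),
    mul_le_mul_of_nonneg_left h2 (show (0:ℝ) ≤ s - 2 by linarith)]
end

section
/- Let S(x) = Σ_{k≥0} a_k x^k be a real power series convergent on [0, ∞) such that for some k₀, the coefficients a_1, …, a_{k₀} are positive and a_{k₀+1}, a_{k₀+2}, … are all negative. Then there exists x₀ ≥ 0 such that S is increasing on [0, x₀] and decreasing on [x₀, ∞); in particular, S attains its minimum on any interval [0, a] at an endpoint. -/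
/-!
Put `m = max k₀ 1`. In the variable `u = x ^ m` the series becomes
`T u = ∑ aₖ u ^ (k / m)`, and every term is concave on `[0, ∞)`: `u ^ (k / m)` is concave
with `aₖ ≥ 0` for `k < m` and convex with `aₖ ≤ 0` for `k > m`. So `T` is concave, and
`S x = T (x ^ m)` is quasiconcave on `[0, ∞)`. The negative coefficient `a (k₀ + 1)` makes `S` drop
below `S 0` somewhere; by continuity `S` then has a global maximum `x₀` on `[0, ∞)`, and
quasiconcavity forces `S` to increase up to `x₀` and decrease after it.
-/

open Set

theorem QuasiconcaveOn.congr {𝕜 E β : Type*} [Semiring 𝕜] [PartialOrder 𝕜] [AddCommMonoid E]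
    [LE β] [SMul 𝕜 E] {s : Set E} {f g : E → β} (hf : QuasiconcaveOn 𝕜 s f) (hfg : EqOn f g s) :
    QuasiconcaveOn 𝕜 s g := by
  intro r
  convert hf r using 1
  ext x
  exact and_congr_right fun hx => by rw [hfg hx]

section Quasiconcave

variable {𝕜 β : Type*} [Field 𝕜] [LinearOrder 𝕜] [IsStrictOrderedRing 𝕜] [LinearOrder β]
  {s : Set 𝕜} {f : 𝕜 → β} {x₀ : 𝕜}

theorem QuasiconcaveOn.min_le_of_mem_Icc (hf : QuasiconcaveOn 𝕜 s f) {x y z : 𝕜}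
    (hx : x ∈ s) (hy : y ∈ s) (hz : z ∈ Icc x y) : min (f x) (f y) ≤ f z :=
  ((hf _).ordConnected.out ⟨hx, min_le_left _ _⟩ ⟨hy, min_le_right _ _⟩ hz).2

theorem QuasiconcaveOn.comp_monotoneOn {t : Set 𝕜} {g : 𝕜 → 𝕜} (hf : QuasiconcaveOn 𝕜 t f)
    (hs : Convex 𝕜 s) (hg : MonotoneOn g s) (hst : MapsTo g s t) :
    QuasiconcaveOn 𝕜 s (f ∘ g) := by
  refine fun r => convex_iff_ordConnected.2 ⟨?_⟩
  rintro x ⟨hx, hxr⟩ y ⟨hy, hyr⟩ z ⟨hxz, hzy⟩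
  have hz : z ∈ s := hs.ordConnected.out hx hy ⟨hxz, hzy⟩
  exact ⟨hz, ((hf r).ordConnected.out ⟨hst hx, hxr⟩ ⟨hst hy, hyr⟩
    ⟨hg hx hz hxz, hg hz hy hzy⟩).2⟩

theorem QuasiconcaveOn.monotoneOn_of_isMaxOn (hf : QuasiconcaveOn 𝕜 s f) (hmax : IsMaxOn f s x₀)
    (hx₀ : x₀ ∈ s) : MonotoneOn f (s ∩ Iic x₀) := by
  rintro x ⟨hx, -⟩ y ⟨hy, hyx₀⟩ hxy
  simpa [min_eq_left (hmax hx)] using hf.min_le_of_mem_Icc hx hx₀ ⟨hxy, hyx₀⟩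

theorem QuasiconcaveOn.antitoneOn_of_isMaxOn (hf : QuasiconcaveOn 𝕜 s f) (hmax : IsMaxOn f s x₀)
    (hx₀ : x₀ ∈ s) : AntitoneOn f (s ∩ Ici x₀) := by
  rintro x ⟨hx, hx₀x⟩ y ⟨hy, -⟩ hxy
  simpa [min_eq_right (hmax hy)] using hf.min_le_of_mem_Icc hx₀ hy ⟨hx₀x, hxy⟩

end Quasiconcave

theorem QuasiconcaveOn.exists_isMaxOn_Ici {f : ℝ → ℝ} {a y : ℝ} (hf : QuasiconcaveOn ℝ (Ici a) f)
    (hcont : ContinuousOn f (Icc a y)) (hay : a ≤ y) (hdrop : f y < f a) :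
    ∃ x₀ ∈ Icc a y, IsMaxOn f (Ici a) x₀ := by
  obtain ⟨x₀, hx₀, hmax⟩ := isCompact_Icc.exists_isMaxOn (nonempty_Icc.2 hay) hcont
  refine ⟨x₀, hx₀, fun z (hz : a ≤ z) => ?_⟩
  rcases le_total z y with hzy | hyz
  · exact hmax ⟨hz, hzy⟩
  · have hzy : f z ≤ f y :=
      (min_le_iff.1 (hf.min_le_of_mem_Icc self_mem_Ici hz ⟨hay, hyz⟩)).resolve_left hdrop.not_ge
    exact hzy.trans (hmax ⟨hay, le_rfl⟩)

theorem ConcaveOn.tsum {ι E : Type*} [AddCommMonoid E] [Module ℝ E] {s : Set E}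
    {f : ι → E → ℝ} (hs : Convex ℝ s) (hf : ∀ i, ConcaveOn ℝ s (f i))
    (hsum : ∀ x ∈ s, Summable fun i => f i x) : ConcaveOn ℝ s fun x => ∑' i, f i x := by
  refine ⟨hs, fun x hx y hy α β hα hβ hαβ => ?_⟩
  simp only [smul_eq_mul]
  rw [← tsum_mul_left, ← tsum_mul_left,
    ← ((hsum x hx).mul_left α).tsum_add ((hsum y hy).mul_left β)]
  exact ((hsum x hx).mul_left α |>.add ((hsum y hy).mul_left β)).tsum_le_tsum
    (fun i => by simpa only [smul_eq_mul] using (hf i).2 hx hy hα hβ hαβ)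
    (hsum _ (hs hx hy hα hβ hαβ))

theorem concaveOn_const_mul_rpow {c p : ℝ} (h : 0 ≤ c ∧ p ≤ 1 ∨ c ≤ 0 ∧ 1 ≤ p) (hp : 0 ≤ p) :
    ConcaveOn ℝ (Ici 0) fun u : ℝ => c * u ^ p := by
  rcases h with ⟨hc, hp1⟩ | ⟨hc, hp1⟩
  · exact (Real.concaveOn_rpow hp hp1).smul hc
  · have h : (-fun u : ℝ => c * u ^ p) = fun u => -c • u ^ p := by
      ext u
      simp
    exact neg_convexOn_iff.1 (h ▸ (convexOn_rpow hp1).smul (neg_nonneg.2 hc))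

theorem concaveOn_tsum_mul_rpow_div {a : ℕ → ℝ} {m : ℕ} (hm : 0 < m)
    (hconv : ∀ x : ℝ, 0 ≤ x → Summable fun k => a k * x ^ k)
    (hpos : ∀ k, 0 < k → k < m → 0 ≤ a k) (hneg : ∀ k, m < k → a k ≤ 0) :
    ConcaveOn ℝ (Ici 0) fun u : ℝ => ∑' k, a k * u ^ ((k : ℝ) / m) := by
  have hm' : (0 : ℝ) < m := by exact_mod_cast hm
  refine ConcaveOn.tsum (convex_Ici 0) (fun k => ?_) fun u (hu : 0 ≤ u) => ?_
  · rcases Nat.eq_zero_or_pos k with rfl | hk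
    · simpa using concaveOn_const (a 0) (convex_Ici (0 : ℝ))
    refine concaveOn_const_mul_rpow ?_ (by positivity)
    rcases lt_trichotomy k m with hkm | rfl | hkm
    · exact .inl ⟨hpos k hk hkm, (div_le_one hm').2 (by exact_mod_cast hkm.le)⟩
    · rw [div_self hm'.ne']
      exact (le_total 0 (a k)).imp (⟨·, le_rfl⟩) (⟨·, le_rfl⟩)
    · exact .inr ⟨hneg k hkm, (one_le_div hm').2 (by exact_mod_cast hkm.le)⟩
  · convert hconv (u ^ (1 / m : ℝ)) (by positivity) using 3 with k
    rw [← Real.rpow_natCast, ← Real.rpow_mul hu, one_div_mul_eq_div]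

theorem quasiconcaveOn_tsum_mul_pow {a : ℕ → ℝ} {m : ℕ} (hm : 0 < m)
    (hconv : ∀ x : ℝ, 0 ≤ x → Summable fun k => a k * x ^ k)
    (hpos : ∀ k, 0 < k → k < m → 0 ≤ a k) (hneg : ∀ k, m < k → a k ≤ 0) :
    QuasiconcaveOn ℝ (Ici 0) fun x : ℝ => ∑' k, a k * x ^ k := by
  refine ((concaveOn_tsum_mul_rpow_div hm hconv hpos hneg).quasiconcaveOn.comp_monotoneOn
    (convex_Ici 0) (g := (· ^ m)) (fun x hx y _ hxy => pow_le_pow_left₀ hx hxy m)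
    (fun x (hx : 0 ≤ x) => pow_nonneg hx m)).congr fun x (hx : 0 ≤ x) => ?_
  have hm' : (m : ℝ) ≠ 0 := by exact_mod_cast hm.ne'
  simp only [Function.comp_apply]
  congr! 2 with k
  rw [← Real.rpow_natCast, ← Real.rpow_mul hx, mul_div_cancel₀ _ hm', Real.rpow_natCast]

theorem continuousOn_tsum_mul_pow {a : ℕ → ℝ} {R : ℝ} (hR : Summable fun k => a k * R ^ k) :
    ContinuousOn (fun x => ∑' k, a k * x ^ k) (Icc 0 R) := by
  refine continuousOn_tsum (fun k => by fun_prop) hR.norm fun k x ⟨hx, hxR⟩ => ?_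
  rw [norm_mul, norm_mul, norm_pow, norm_pow, Real.norm_of_nonneg hx,
    Real.norm_of_nonneg (hx.trans hxR)]
  gcongr

theorem tsum_mul_zero_pow (a : ℕ → ℝ) : ∑' k, a k * 0 ^ k = a 0 := by
  rw [tsum_eq_single 0 fun k hk => by simp [zero_pow hk]]
  simp

open Finset in
theorem exists_tsum_mul_pow_lt_coeff_zero {a : ℕ → ℝ} {k₀ : ℕ}
    (hconv : ∀ x : ℝ, 0 ≤ x → Summable fun k => a k * x ^ k)
    (hpos : ∀ k, 0 < k → k ≤ k₀ → 0 ≤ a k) (hneg : ∀ k, k₀ < k → a k ≤ 0)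
    (hlead : a (k₀ + 1) < 0) : ∃ y, 0 < y ∧ ∑' k, a k * y ^ k < a 0 := by
  set A := ∑ i ∈ range k₀, a (i + 1)
  set c := -a (k₀ + 1)
  have hA : 0 ≤ A := sum_nonneg fun i hi => hpos _ i.succ_pos (mem_range.1 hi)
  have hc : 0 < c := neg_pos.2 hlead
  -- at this `y` the leading negative term outweighs all the positive ones
  set y := 1 + A / c
  have hy : 1 ≤ y := le_add_of_nonneg_right (div_nonneg hA hc.le)
  have hcy : c * y = c + A := by simp only [y]; field_simp
  have htail : ∑' j, a (j + (k₀ + 2)) * y ^ (j + (k₀ + 2)) ≤ 0 :=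
    tsum_nonpos fun j => mul_nonpos_of_nonpos_of_nonneg (hneg _ (by omega)) (by positivity)
  have hmid : ∑ i ∈ range k₀, a (i + 1) * y ^ (i + 1) ≤ A * y ^ k₀ := by
    rw [sum_mul]
    exact sum_le_sum fun i hi => mul_le_mul_of_nonneg_left
      (pow_le_pow_right₀ hy (mem_range.1 hi)) (hpos _ i.succ_pos (mem_range.1 hi))
  refine ⟨y, by linarith, ?_⟩
  calc ∑' k, a k * y ^ k
      = ∑ k ∈ range (k₀ + 2), a k * y ^ k + ∑' j, a (j + (k₀ + 2)) * y ^ (j + (k₀ + 2)) :=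
        ((hconv y (by linarith)).sum_add_tsum_nat_add _).symm
    _ ≤ a 0 + ∑ i ∈ range k₀, a (i + 1) * y ^ (i + 1) - c * y * y ^ k₀ := by
        rw [sum_range_succ, sum_range_succ']
        simp only [c, pow_succ]
        linarith
    _ ≤ a 0 - c * y ^ k₀ := by rw [hcy]; linarith
    _ < a 0 := sub_lt_self _ (mul_pos hc (pow_pos (by linarith) k₀))

theorem stmt_11 (a : ℕ → ℝ) (k₀ : ℕ)
    (hconv : ∀ x : ℝ, 0 ≤ x → Summable (fun k : ℕ => a k * x ^ k))
    (hpos : ∀ k : ℕ, 1 ≤ k → k ≤ k₀ → 0 < a k)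
    (hneg : ∀ k : ℕ, k₀ < k → a k < 0)
    (S : ℝ → ℝ) (hS : ∀ x : ℝ, S x = ∑' k : ℕ, a k * x ^ k) :
    ∃ x₀ : ℝ, 0 ≤ x₀ ∧ MonotoneOn S (Set.Icc 0 x₀) ∧ AntitoneOn S (Set.Ici x₀) ∧
      ∀ c : ℝ, 0 ≤ c → ∀ x ∈ Set.Icc (0 : ℝ) c, min (S 0) (S c) ≤ S x := by
  obtain rfl : S = fun x => ∑' k, a k * x ^ k := funext hS
  have hquasi : QuasiconcaveOn ℝ (Ici 0) fun x : ℝ => ∑' k, a k * x ^ k :=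
    quasiconcaveOn_tsum_mul_pow (m := max k₀ 1) (by omega) hconv
      (fun k hk hkm => (hpos k hk (by omega)).le) fun k hk => (hneg k (by omega)).le
  obtain ⟨y, hy, hdrop⟩ := exists_tsum_mul_pow_lt_coeff_zero hconv
    (fun k hk hkk₀ => (hpos k hk hkk₀).le) (fun k hk => (hneg k hk).le) (hneg _ k₀.lt_succ_self)
  obtain ⟨x₀, ⟨hx₀, -⟩, hmax⟩ := hquasi.exists_isMaxOn_Ici
    (continuousOn_tsum_mul_pow (hconv y hy.le)) hy.le (by rwa [tsum_mul_zero_pow])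
  refine ⟨x₀, hx₀, ?_, ?_, fun c hc x hx => hquasi.min_le_of_mem_Icc self_mem_Ici hc hx⟩
  · simpa only [Ici_inter_Iic] using hquasi.monotoneOn_of_isMaxOn hmax hx₀
  · simpa only [Ici_inter_Ici, max_eq_right hx₀] using hquasi.antitoneOn_of_isMaxOn hmax hx₀
end

section
/- For 1 < p ≤ 2 and 0 < t ≤ π, the function φ(t) = sin(tp/2) / (sin(t/2)·cos^{p−1}(t/2)) is monotone increasing on (0, π). -/
open Real

lemma aux_sin_star (a b : ℝ) (ha : 0 ≤ a) (hab : a ≤ b) (hb : b ≤ π) :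
    a * Real.sin b ≤ b * Real.sin a := by
  rcases ha.eq_or_lt with rfl | ha'
  · simp
  have hb0 : 0 < b := ha'.trans_le hab
  have m0 : (0:ℝ) ∈ Set.Icc 0 π := ⟨le_refl 0, Real.pi_pos.le⟩
  have mb : b ∈ Set.Icc 0 π := ⟨hb0.le, hb⟩
  have h1 : (0:ℝ) ≤ 1 - a / b := by
    rw [sub_nonneg]; exact (div_le_one hb0).2 hab
  have h2 : (0:ℝ) ≤ a / b := by positivity
  have h3 : (1 - a / b) + a / b = 1 := by ring
  have h := strictConcaveOn_sin_Icc.concaveOn.2 m0 mb h1 h2 h3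
  simp only [smul_eq_mul, mul_zero, Real.sin_zero, zero_add] at h
  rw [div_mul_cancel₀ _ hb0.ne'] at h
  calc a * Real.sin b = b * (a / b * Real.sin b) := by field_simp
    _ ≤ b * Real.sin a := by
        exact mul_le_mul_of_nonneg_left h hb0.le

theorem stmt_12 (p : ℝ) (hp1 : 1 < p) (hp2 : p ≤ 2) :
    MonotoneOn (fun t : ℝ =>
        Real.sin (t * p / 2) / (Real.sin (t / 2) * Real.cos (t / 2) ^ (p - 1)))
      (Set.Ioo 0 Real.pi) := by
  have hder : ∀ t ∈ Set.Ioo (0:ℝ) π,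
      HasDerivAt (fun t : ℝ =>
        Real.sin (t * p / 2) / (Real.sin (t / 2) * Real.cos (t / 2) ^ (p - 1)))
      ((Real.cos (t * p / 2) * (p / 2) * (Real.sin (t / 2) * Real.cos (t / 2) ^ (p - 1)) -
        Real.sin (t * p / 2) *
          (Real.cos (t / 2) * (1 / 2) * Real.cos (t / 2) ^ (p - 1) +
            Real.sin (t / 2) * (-Real.sin (t / 2) * (1 / 2) * (p - 1) *
              Real.cos (t / 2) ^ (p - 1 - 1)))) /
        (Real.sin (t / 2) * Real.cos (t / 2) ^ (p - 1)) ^ 2) t := by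
    intro t ht
    have hc : 0 < Real.cos (t / 2) := by
      apply Real.cos_pos_of_mem_Ioo
      constructor <;> [linarith [ht.1, Real.pi_pos]; linarith [ht.2]]
    have hs : 0 < Real.sin (t / 2) := by
      apply Real.sin_pos_of_pos_of_lt_pi
      · linarith [ht.1]
      · linarith [ht.2, Real.pi_pos]
    have h1 : HasDerivAt (fun t : ℝ => Real.sin (t * p / 2)) (Real.cos (t * p / 2) * (p / 2)) t := by
      have : HasDerivAt (fun t : ℝ => t * p / 2) (p / 2) t := by
        simpa using ((hasDerivAt_id t).mul_const p).div_const 2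
      exact this.sin
    have h2 : HasDerivAt (fun t : ℝ => Real.sin (t / 2)) (Real.cos (t / 2) * (1 / 2)) t := by
      have : HasDerivAt (fun t : ℝ => t / 2) (1 / 2) t := by
        simpa using (hasDerivAt_id t).div_const 2
      exact this.sin
    have h3 : HasDerivAt (fun t : ℝ => Real.cos (t / 2)) (-Real.sin (t / 2) * (1 / 2)) t := by
      have : HasDerivAt (fun t : ℝ => t / 2) (1 / 2) t := by
        simpa using (hasDerivAt_id t).div_const 2
      exact this.cos
    have h4 : HasDerivAt (fun t : ℝ => Real.cos (t / 2) ^ (p - 1))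
        (-Real.sin (t / 2) * (1 / 2) * (p - 1) * Real.cos (t / 2) ^ (p - 1 - 1)) t :=
      h3.rpow_const (Or.inl hc.ne')
    have hD : HasDerivAt (fun t : ℝ => Real.sin (t / 2) * Real.cos (t / 2) ^ (p - 1))
        (Real.cos (t / 2) * (1 / 2) * Real.cos (t / 2) ^ (p - 1) +
          Real.sin (t / 2) * (-Real.sin (t / 2) * (1 / 2) * (p - 1) *
            Real.cos (t / 2) ^ (p - 1 - 1))) t := h2.mul h4
    have hDne : Real.sin (t / 2) * Real.cos (t / 2) ^ (p - 1) ≠ 0 := by positivity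
    exact h1.div hD hDne
  apply monotoneOn_of_deriv_nonneg (convex_Ioo 0 π)
  · intro t ht
    exact ((hder t ht).differentiableAt).continuousAt.continuousWithinAt
  · rw [interior_Ioo]
    intro t ht
    exact ((hder t ht).differentiableAt).differentiableWithinAt
  · rw [interior_Ioo]
    intro t ht
    rw [(hder t ht).deriv]
    have hc : 0 < Real.cos (t / 2) := by
      apply Real.cos_pos_of_mem_Ioo
      constructor <;> [linarith [ht.1, Real.pi_pos]; linarith [ht.2]]
    have hs : 0 < Real.sin (t / 2) := by
      apply Real.sin_pos_of_pos_of_lt_pi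
      · linarith [ht.1]
      · linarith [ht.2, Real.pi_pos]
    apply div_nonneg _ (sq_nonneg _)
    set s := Real.sin (t / 2)
    set c := Real.cos (t / 2)
    have hpow : c ^ (p - 1) = c ^ (p - 2) * c := by
      rw [show p - 1 = (p - 2) + 1 by ring, Real.rpow_add_one hc.ne']
    have hpow2 : c ^ (p - 1 - 1) = c ^ (p - 2) := by rw [show p - 1 - 1 = p - 2 by ring]
    -- key inequality
    have hkey : (2 - p) * Real.sin (t * p / 2) ≤ p * Real.sin ((2 - p) * (t / 2)) := by
      have h := aux_sin_star ((2 - p) * (t / 2)) (p * (t / 2))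
        (by nlinarith [ht.1]) (by nlinarith [ht.1]) (by nlinarith [ht.1, ht.2])
      rw [show p * (t / 2) = t * p / 2 by ring] at h
      nlinarith [ht.1, h]
    -- trig identity
    have hid : Real.cos (t * p / 2) * (p / 2) * (s * c) -
        Real.sin (t * p / 2) * (c * (1 / 2) * c + s * (-s * (1 / 2) * (p - 1))) =
        (1 / 4) * (p * Real.sin ((2 - p) * (t / 2)) - (2 - p) * Real.sin (t * p / 2)) := by
      have e1 : Real.sin ((2 - p) * (t / 2)) =
          Real.sin t * Real.cos (t * p / 2) - Real.cos t * Real.sin (t * p / 2) := by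
        rw [show (2 - p) * (t / 2) = t - t * p / 2 by ring, Real.sin_sub]
      have e2 : Real.sin t = 2 * s * c := by
        have h := Real.sin_two_mul (t / 2)
        rw [show 2 * (t / 2) = t by ring] at h
        simpa [s, c] using h
      have e3 : Real.cos t = 2 * c ^ 2 - 1 := by
        have h := Real.cos_two_mul (t / 2)
        rw [show 2 * (t / 2) = t by ring] at h
        simpa [c] using h
      have e4 : s ^ 2 + c ^ 2 = 1 := Real.sin_sq_add_cos_sq (t / 2)
      rw [e1, e2, e3]
      linear_combination ((p - 1) * Real.sin (t * p / 2) / 2) * e4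
    have hfac : Real.cos (t * p / 2) * (p / 2) * (s * c ^ (p - 1)) -
        Real.sin (t * p / 2) * (c * (1 / 2) * c ^ (p - 1) +
          s * (-s * (1 / 2) * (p - 1) * c ^ (p - 1 - 1))) =
        c ^ (p - 2) * (Real.cos (t * p / 2) * (p / 2) * (s * c) -
          Real.sin (t * p / 2) * (c * (1 / 2) * c + s * (-s * (1 / 2) * (p - 1)))) := by
      rw [hpow, hpow2]; ring
    rw [hfac, hid]
    have h0 : 0 ≤ c ^ (p - 2) := by positivity
    exact mul_nonneg h0 (by linarith [hkey])
end

section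
/- For all real s ≥ 4 + 2√2, one has π(4s − 3)/(3s² + 8s) ≤ arctan(1/√(s−1)). -/
/-!
`arctan` is concave on `[0, ∞)`, vanishes at `0` and takes the value `π / 8` at `√2 - 1`, so on
`[0, √2 - 1]` it lies above its chord: `arctan t ≥ (√2 + 1) π t / 8`. For `x = √(s - 1)` and
`t = 1 / x` this reduces the claim to the polynomial inequality
`8 x (4 x² + 1) ≤ (√2 + 1) (3 x⁴ + 14 x² + 11)` for `x ≥ √2 + 1`, which is an equality at
`x = √2 + 1` and has nonnegative coefficients in powers of `x - (√2 + 1)`.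
-/

open Real Set

theorem ConcaveOn.mul_map_le_map_smul {E : Type*} [AddCommGroup E] [Module ℝ E] {s : Set E}
    {f : E → ℝ} (hf : ConcaveOn ℝ s f) (h0 : (0 : E) ∈ s) (hf0 : f 0 = 0) {x : E} (hx : x ∈ s)
    {c : ℝ} (hc0 : 0 ≤ c) (hc1 : c ≤ 1) : c * f x ≤ f (c • x) := by
  simpa [hf0] using hf.2 h0 hx (sub_nonneg.2 hc1) hc0 (sub_add_cancel 1 c)

namespace Real

theorem concaveOn_arctan : ConcaveOn ℝ (Ici 0) arctan := by
  refine AntitoneOn.concaveOn_of_deriv (convex_Ici 0) continuous_arctan.continuousOn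
    differentiable_arctan.differentiableOn ?_
  rw [interior_Ici, deriv_arctan]
  intro a ha b _ hab
  have : a ^ 2 ≤ b ^ 2 := pow_le_pow_left₀ ha.le hab 2
  exact one_div_le_one_div_of_le (by positivity) (by linarith)

theorem tan_pi_div_eight : tan (π / 8) = √2 - 1 := by
  have h2 : √2 ^ 2 = 2 := sq_sqrt zero_le_two
  have hsub : √(2 - √2) = (√2 - 1) * √(2 + √2) := by
    rw [← sqrt_sq (by nlinarith [sqrt_nonneg 2] : 0 ≤ √2 - 1), ← sqrt_mul (by positivity)]
    congr 1
    nlinarith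
  have : 0 < √(2 + √2) := sqrt_pos.2 (by positivity)
  rw [tan_eq_sin_div_cos, sin_pi_div_eight, cos_pi_div_eight, hsub]
  field_simp

theorem arctan_sqrt_two_sub_one : arctan (√2 - 1) = π / 8 := by
  rw [← tan_pi_div_eight, arctan_tan] <;> linarith [pi_pos]

theorem sqrt_two_add_one_mul_pi_div_le_arctan_one_div {x : ℝ} (hx : √2 + 1 ≤ x) :
    (√2 + 1) * π / (8 * x) ≤ arctan (1 / x) := by
  have h2 : √2 ^ 2 = 2 := sq_sqrt zero_le_two
  have hx0 : 0 < x := by nlinarith [sqrt_nonneg 2]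
  have hchord := concaveOn_arctan.mul_map_le_map_smul self_mem_Ici arctan_zero
    (x := √2 - 1) (by simp [one_le_sqrt.2 one_le_two]) (by positivity) ((div_le_one hx0).2 hx)
  have hscale : ((√2 + 1) / x) • (√2 - 1) = 1 / x := by
    rw [smul_eq_mul, div_mul_eq_mul_div]
    congr 1
    linear_combination h2
  rw [hscale, arctan_sqrt_two_sub_one] at hchord
  calc (√2 + 1) * π / (8 * x) = (√2 + 1) / x * (π / 8) := by field_simp
    _ ≤ arctan (1 / x) := hchord

end Real

theorem eight_mul_le_sqrt_two_add_one_mul {x : ℝ} (hx : √2 + 1 ≤ x) :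
    8 * x * (4 * x ^ 2 + 1) ≤ (√2 + 1) * (3 * x ^ 4 + 14 * x ^ 2 + 11) := by
  set c := √2 + 1
  have hc : c ^ 2 = 2 * c + 1 := by linear_combination sq_sqrt zero_le_two
  have hc2 : 2 ≤ c := by linarith [one_le_sqrt.2 one_le_two]
  obtain ⟨y, hy, rfl⟩ : ∃ y ≥ 0, x = c + y := ⟨x - c, by linarith, by ring⟩
  have hexpand :
      c * (3 * (c + y) ^ 4 + 14 * (c + y) ^ 2 + 11) - 8 * (c + y) * (4 * (c + y) ^ 2 + 1) =
        (8 * c - 16) * y + (8 * c + 36) * y ^ 2 + (24 * c - 20) * y ^ 3 + 3 * c * y ^ 4 := by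
    linear_combination (3 * c ^ 3 + 12 * c ^ 2 * y + 6 * c ^ 2 + 18 * c * y ^ 2 + 24 * c * y
      - 3 * c + 12 * y ^ 3 + 36 * y ^ 2 - 8 * y) * hc
  have h1 : 0 ≤ (8 * c - 16) * y := mul_nonneg (by linarith) hy
  have h2 : 0 ≤ (8 * c + 36) * y ^ 2 := mul_nonneg (by linarith) (pow_nonneg hy 2)
  have h3 : 0 ≤ (24 * c - 20) * y ^ 3 := mul_nonneg (by linarith) (pow_nonneg hy 3)
  have h4 : 0 ≤ 3 * c * y ^ 4 := mul_nonneg (by linarith) (pow_nonneg hy 4)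
  linarith

theorem stmt_15 (s : ℝ) (hs : 4 + 2 * Real.sqrt 2 ≤ s) :
    Real.pi * (4 * s - 3) / (3 * s ^ 2 + 8 * s) ≤ Real.arctan (1 / Real.sqrt (s - 1)) := by
  have h2 : √2 ^ 2 = 2 := sq_sqrt zero_le_two
  set x := √(s - 1)
  have hsx : s = x ^ 2 + 1 := by linarith [sq_sqrt (by nlinarith [sqrt_nonneg 2] : 0 ≤ s - 1)]
  have hx : √2 + 1 ≤ x := (le_sqrt' (by positivity)).2 (by linear_combination hs + h2)
  refine le_trans ?_ (sqrt_two_add_one_mul_pi_div_le_arctan_one_div hx)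
  have hx0 : 0 < x := by nlinarith [sqrt_nonneg 2]
  rw [hsx, div_le_div_iff₀ (by positivity) (by positivity)]
  linear_combination mul_le_mul_of_nonneg_left (eight_mul_le_sqrt_two_add_one_mul hx) pi_pos.le
end

section
/- For 1 < p ≤ 5/4, one has (p/(p−2))·cos(π/p) ≥ cosh(π(p−1)). Note p − 2 < 0 and cos(π/p) < 0 so the left side is positive. -/
lemma cosh_poly_bound {x : ℝ} (h0 : 0 ≤ x) (h1 : x ≤ 1) :
    Real.cosh x ≤ 1 + x ^ 2 / 2 + 5 * x ^ 4 / 96 := by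
  have hx : |x| ≤ 1 := by rw [abs_of_nonneg h0]; exact h1
  have hnx : |(-x)| ≤ 1 := by rwa [abs_neg]
  have hb1 := Real.exp_bound hx (n := 4) (by norm_num)
  have hb2 := Real.exp_bound hnx (n := 4) (by norm_num)
  have hs1 : ∑ m ∈ Finset.range 4, x ^ m / (m.factorial : ℝ)
      = 1 + x + x ^ 2 / 2 + x ^ 3 / 6 := by
    norm_num [Finset.sum_range_succ, Nat.factorial]
  have hs2 : ∑ m ∈ Finset.range 4, (-x) ^ m / (m.factorial : ℝ)
      = 1 - x + x ^ 2 / 2 - x ^ 3 / 6 := by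
    norm_num [Finset.sum_range_succ, Nat.factorial]
    ring
  rw [hs1] at hb1
  rw [hs2, abs_neg] at hb2
  rw [abs_of_nonneg h0] at hb1 hb2
  norm_num [Nat.factorial] at hb1 hb2
  have h1' := (abs_sub_le_iff.1 hb1).1
  have h2' := (abs_sub_le_iff.1 hb2).1
  rw [Real.cosh_eq]
  linarith

set_option maxHeartbeats 1000000 in
theorem stmt_16 (p : ℝ) (hp1 : 1 < p) (hp2 : p ≤ 5 / 4) :
    Real.cosh (Real.pi * (p - 1)) ≤ (p / (p - 2)) * Real.cos (Real.pi / p) := by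
  set t : ℝ := p - 1 with ht
  have ht0 : 0 < t := by simp only [ht]; linarith
  have ht4 : t ≤ 1 / 4 := by simp only [ht]; linarith
  have hp0 : 0 < p := by linarith
  have hpi := Real.pi_pos
  have hpil : Real.pi < 3.141593 := Real.pi_lt_d6
  have hpig : 3.141592 < Real.pi := Real.pi_gt_d6
  -- rewrite cos(π/p) = -cos(π t / p)
  have hcos : Real.cos (Real.pi / p) = - Real.cos (Real.pi * t / p) := by
    have harg : Real.pi / p = Real.pi - Real.pi * t / p := by
      field_simp
      ring
    rw [harg, Real.cos_pi_sub]
  rw [hcos]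
  have h2p : (0:ℝ) < 2 - p := by linarith
  set c : ℝ := Real.cos (Real.pi * t / p) with hc
  have hRHS : (p / (p - 2)) * (-c) = p * c / (2 - p) := by
    have h1 : p - 2 ≠ 0 := by linarith
    have h2 : (2:ℝ) - p ≠ 0 := by linarith
    field_simp
    ring
  rw [hRHS]
  -- lower bound cos
  have hclb : 1 - (Real.pi * t / p) ^ 2 / 2 ≤ c := Real.one_sub_sq_div_two_le_cos
  -- upper bound cosh
  have hxt1 : Real.pi * t ≤ 1 := by nlinarith
  have hcub : Real.cosh (Real.pi * t) ≤ 1 + (Real.pi * t) ^ 2 / 2 + 5 * (Real.pi * t) ^ 4 / 96 :=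
    cosh_poly_bound (by positivity) hxt1
  have hp1t : p = 1 + t := by simp only [ht]; ring
  have h1t : (0:ℝ) < 1 + t := by linarith
  -- key polynomial inequality
  have key : 1 + (Real.pi * t) ^ 2 / 2 + 5 * (Real.pi * t) ^ 4 / 96
      ≤ p * (1 - (Real.pi * t / p) ^ 2 / 2) / (2 - p) := by
    rw [le_div_iff₀ h2p]
    have hEq : p * (1 - (Real.pi * t / p) ^ 2 / 2)
        = ((1 + t) ^ 2 - (Real.pi * t) ^ 2 / 2) / (1 + t) := by
      rw [hp1t]
      field_simp
    rw [hEq, le_div_iff₀ h1t, hp1t]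
    set s : ℝ := Real.pi ^ 2 with hs
    have hs_ub : s < 9.86961 := by nlinarith
    have hs_lb : 9.8696 < s := by nlinarith
    have hs2_ub : s ^ 2 < 97.4093 := by nlinarith
    have hDiff : (1 + t) ^ 2 - (Real.pi * t) ^ 2 / 2
        - (1 + (Real.pi * t) ^ 2 / 2 + 5 * (Real.pi * t) ^ 4 / 96) * (2 - (1 + t)) * (1 + t)
        = t * (2 + 2 * t - (s - 2) * t - 2 * t - (5 * s ^ 2 / 96 - s / 2) * t ^ 3
            + (5 * s ^ 2 / 96) * t ^ 5) := by
      simp only [hs]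
      ring
    have e2 : t ^ 3 ≤ 1 / 64 := by
      have h := pow_le_pow_left₀ ht0.le ht4 3
      norm_num at h
      linarith
    have e3 : 5 * s ^ 2 / 96 - s / 2 ≤ 0.139 := by nlinarith
    have e4 : (5 * s ^ 2 / 96 - s / 2) * t ^ 3 ≤ 0.139 * (1 / 64) := by
      rcases le_or_gt (5 * s ^ 2 / 96 - s / 2) 0 with h | h
      · nlinarith [pow_pos ht0 3]
      · exact mul_le_mul e3 e2 (by positivity) (by norm_num)
    have e5 : (s - 2) * t ≤ 7.86961 * (1 / 4) :=
      mul_le_mul (by linarith) ht4 ht0.le (by norm_num)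
    have e6 : (0:ℝ) ≤ (5 * s ^ 2 / 96) * t ^ 5 := by positivity
    have hbracket : 0 ≤ 2 + 2 * t - (s - 2) * t - 2 * t - (5 * s ^ 2 / 96 - s / 2) * t ^ 3
        + (5 * s ^ 2 / 96) * t ^ 5 := by linarith
    linarith [mul_nonneg ht0.le hbracket, hDiff]
  calc Real.cosh (Real.pi * t) ≤ 1 + (Real.pi * t) ^ 2 / 2 + 5 * (Real.pi * t) ^ 4 / 96 := hcub
    _ ≤ p * (1 - (Real.pi * t / p) ^ 2 / 2) / (2 - p) := key
    _ ≤ p * c / (2 - p) := by gcongr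
end

section
/- For 5/4 ≤ p ≤ 4/3, one has (p/(p−2))·cos(π/p) ≥ cosh(13(p−1)/5). -/
set_option maxHeartbeats 1000000

open Real

/-- Polynomial lower bound for cos via two angle-doublings of `Real.cos_bound`. -/
lemma my_cos_lb (u : ℝ) (h0 : 0 ≤ u) (h1 : u ≤ 1) :
    2 * (2 * (1 - (u/4)^2/2 - 5*(u/4)^4/96)^2 - 1)^2 - 1 ≤ Real.cos u := by
  have habs : |u/4| ≤ 1 := by rw [abs_of_nonneg (by linarith)]; linarith
  have hb := Real.cos_bound habs
  rw [abs_of_nonneg (by linarith : (0:ℝ) ≤ u/4)] at hb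
  have hc1 : 1 - (u/4)^2/2 - 5*(u/4)^4/96 ≤ Real.cos (u/4) := by
    have := abs_sub_le_iff.1 hb
    nlinarith [this.2]
  have husq : u^2 ≤ 1 := by nlinarith
  have hu4 : u^4 ≤ 1 := by nlinarith [sq_nonneg u, sq_nonneg (u^2)]
  have hc1pos : (0:ℝ) < 1 - (u/4)^2/2 - 5*(u/4)^4/96 := by nlinarith
  have hhalf : Real.cos (u/2) = 2 * Real.cos (u/4)^2 - 1 := by
    rw [show u/2 = 2*(u/4) by ring, Real.cos_two_mul]
  have hd : 2 * (1 - (u/4)^2/2 - 5*(u/4)^4/96)^2 - 1 ≤ Real.cos (u/2) := by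
    rw [hhalf]; nlinarith
  have hdpos : (0:ℝ) < 2 * (1 - (u/4)^2/2 - 5*(u/4)^4/96)^2 - 1 := by nlinarith [husq, hu4, sq_nonneg (u^2), sq_nonneg (u^4), sq_nonneg (u^3)]
  have hfull : Real.cos u = 2 * Real.cos (u/2)^2 - 1 := by
    rw [show u = 2*(u/2) by ring, Real.cos_two_mul]
    ring_nf
  rw [hfull]; nlinarith

/-- Taylor upper bound for cosh on [0,1]. -/
lemma my_cosh_ub (x : ℝ) (h0 : 0 ≤ x) (h1 : x ≤ 1) :
    Real.cosh x ≤ 1 + x^2/2 + x^4/24 + x^6/720 + x^7/4410 := by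
  have habs : |x| ≤ 1 := by rw [abs_of_nonneg h0]; exact h1
  have habs' : |(-x)| ≤ 1 := by rw [abs_neg]; exact habs
  have h7 : (0:ℕ) < 7 := by norm_num
  have hb1 := Real.exp_bound habs h7
  have hb2 := Real.exp_bound habs' h7
  rw [abs_of_nonneg h0] at hb1
  rw [abs_neg, abs_of_nonneg h0] at hb2
  simp only [Finset.sum_range_succ, Finset.sum_range_zero] at hb1 hb2
  norm_num [Nat.factorial] at hb1 hb2
  have e1 := (abs_sub_le_iff.1 hb1).1
  have e2 := (abs_sub_le_iff.1 hb2).1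
  rw [Real.cosh_eq]
  nlinarith [e1, e2]

/-- Generic subinterval step. -/
lemma my_step (p a b u : ℝ) (hap : a ≤ p) (hpb : p ≤ b)
    (ha : 5/4 ≤ a) (hb : b ≤ 4/3)
    (hu1 : 31416/10000 * ((b-1)/b) ≤ u) (hu2 : u ≤ 1)
    (hnum : 1 + (13*(b-1)/5)^2/2 + (13*(b-1)/5)^4/24 + (13*(b-1)/5)^6/720 + (13*(b-1)/5)^7/4410
        ≤ (a/(2-a)) * (2 * (2 * (1 - (u/4)^2/2 - 5*(u/4)^4/96)^2 - 1)^2 - 1)) :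
    Real.cosh (13 * (p - 1) / 5) ≤ (p / (p - 2)) * Real.cos (Real.pi / p) := by
  have hb54 : (5:ℝ)/4 ≤ b := le_trans ha (le_trans hap hpb)
  have hp0 : (0:ℝ) < p := by linarith
  have hb0 : (0:ℝ) < b := by linarith
  have hu0 : 0 ≤ u := by
    have h : (0:ℝ) ≤ 31416/10000 * ((b-1)/b) :=
      mul_nonneg (by norm_num) (div_nonneg (by linarith) (by linarith))
    linarith
  -- LHS bound
  have hxb : 13 * (p - 1) / 5 ≤ 13 * (b - 1) / 5 := by linarith
  have hxb1 : 13 * (b - 1) / 5 ≤ 1 := by linarith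
  have hlhs : Real.cosh (13 * (p - 1) / 5) ≤ Real.cosh (13 * (b - 1) / 5) := by
    rw [Real.cosh_le_cosh]
    rw [abs_of_nonneg (by linarith), abs_of_nonneg (by linarith)]
    exact hxb
  have hlhs2 := my_cosh_ub (13 * (b - 1) / 5) (by linarith) hxb1
  -- RHS rewrite
  have hrw : (p / (p - 2)) * Real.cos (Real.pi / p)
      = (p / (2 - p)) * Real.cos (Real.pi - Real.pi / p) := by
    rw [Real.cos_pi_sub]
    have h2p : (2:ℝ) - p ≠ 0 := by intro h; linarith
    have hp2 : p - 2 ≠ 0 := by intro h; linarith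
    field_simp
    ring
  rw [hrw]
  have hpi1 := Real.pi_gt_d6
  have hpi2 := Real.pi_lt_d2
  have hpi3 : Real.pi < 31416/10000 := by
    have := Real.pi_lt_d6
    norm_num at this ⊢
    linarith
  have ht0 : 0 ≤ Real.pi - Real.pi / p := by
    have : Real.pi / p ≤ Real.pi := by
      rw [div_le_iff₀ hp0]
      exact le_mul_of_one_le_right Real.pi_pos.le (by linarith)
    linarith
  have htu : Real.pi - Real.pi / p ≤ u := by
    have heq : Real.pi - Real.pi / p = Real.pi * ((p-1)/p) := by
      field_simp
    have h1 : (p-1)/p ≤ (b-1)/b := by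
      rw [div_le_div_iff₀ hp0 hb0]; ring_nf; nlinarith [hpb]
    have h2 : (0:ℝ) ≤ (p-1)/p := div_nonneg (by linarith) (le_of_lt hp0)
    have : Real.pi * ((p-1)/p) ≤ 31416/10000 * ((b-1)/b) := by
      apply mul_le_mul (le_of_lt hpi3) h1 h2 (by norm_num)
    linarith
  have hcos1 : Real.cos u ≤ Real.cos (Real.pi - Real.pi / p) :=
    Real.cos_le_cos_of_nonneg_of_le_pi ht0 (by linarith) htu
  have hcos2 := my_cos_lb u hu0 hu2
  have ha0 : (0:ℝ) < a / (2 - a) := by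
    apply div_pos (by linarith) (by linarith)
  have hx0 : (0:ℝ) ≤ 13*(b-1)/5 := by linarith
  have hG1 : (0:ℝ) < 1 + (13*(b-1)/5)^2/2 + (13*(b-1)/5)^4/24 + (13*(b-1)/5)^6/720 + (13*(b-1)/5)^7/4410 := by
    have h2 := pow_nonneg hx0 2
    have h4 := pow_nonneg hx0 4
    have h6 := pow_nonneg hx0 6
    have h7 := pow_nonneg hx0 7
    linarith
  have hGF : (0:ℝ) < (a/(2-a)) * (2 * (2 * (1 - (u/4)^2/2 - 5*(u/4)^4/96)^2 - 1)^2 - 1) :=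
    lt_of_lt_of_le hG1 hnum
  have hF0 : (0:ℝ) ≤ 2 * (2 * (1 - (u/4)^2/2 - 5*(u/4)^4/96)^2 - 1)^2 - 1 := by
    by_contra hneg
    push_neg at hneg
    have := mul_neg_of_pos_of_neg ha0 hneg
    linarith
  have hcoef : a / (2 - a) ≤ p / (2 - p) := by
    rw [div_le_div_iff₀ (by linarith) (by linarith)]; ring_nf; nlinarith [hap]
  have hmul : (a/(2-a)) * (2 * (2 * (1 - (u/4)^2/2 - 5*(u/4)^4/96)^2 - 1)^2 - 1)
      ≤ (p/(2-p)) * Real.cos (Real.pi - Real.pi / p) := by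
    exact mul_le_mul hcoef (by linarith) hF0 (le_of_lt (div_pos hp0 (by linarith)))
  linarith

theorem stmt_17 (p : ℝ) (hp1 : 5 / 4 ≤ p) (hp2 : p ≤ 4 / 3) :
    Real.cosh (13 * (p - 1) / 5) ≤ (p / (p - 2)) * Real.cos (Real.pi / p) := by
  rcases le_total p (61/48) with h0 | h0
  · exact my_step p (5/4) (61/48) (66953/100000) hp1 h0 (by norm_num) (by norm_num) (by norm_num) (by norm_num) (by norm_num)
  rcases le_total p (247/192) with h1 | h1
  · exact my_step p (61/48) (247/192) (13991/20000) h0 h1 (by norm_num) (by norm_num) (by norm_num) (by norm_num) (by norm_num)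
  rcases le_total p (997/768) with h2 | h2
  · exact my_step p (247/192) (997/768) (451/625) h1 h2 (by norm_num) (by norm_num) (by norm_num) (by norm_num) (by norm_num)
  rcases le_total p (669/512) with h3 | h3
  · exact my_step p (997/768) (669/512) (73727/100000) h2 h3 (by norm_num) (by norm_num) (by norm_num) (by norm_num) (by norm_num)
  rcases le_total p (2017/1536) with h4 | h4
  · exact my_step p (669/512) (2017/1536) (74919/100000) h3 h4 (by norm_num) (by norm_num) (by norm_num) (by norm_num) (by norm_num)
  rcases le_total p (253/192) with h5 | h5
  · exact my_step p (2017/1536) (253/192) (75747/100000) h4 h5 (by norm_num) (by norm_num) (by norm_num) (by norm_num) (by norm_num)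
  rcases le_total p (1015/768) with h6 | h6
  · exact my_step p (253/192) (1015/768) (76451/100000) h5 h6 (by norm_num) (by norm_num) (by norm_num) (by norm_num) (by norm_num)
  rcases le_total p (2039/1536) with h7 | h7
  · exact my_step p (1015/768) (2039/1536) (31/40) h6 h7 (by norm_num) (by norm_num) (by norm_num) (by norm_num) (by norm_num)
  rcases le_total p (681/512) with h8 | h8
  · exact my_step p (2039/1536) (681/512) (19491/25000) h7 h8 (by norm_num) (by norm_num) (by norm_num) (by norm_num) (by norm_num)
  rcases le_total p (2045/1536) with h9 | h9
  · exact my_step p (681/512) (2045/1536) (15639/20000) h8 h9 (by norm_num) (by norm_num) (by norm_num) (by norm_num) (by norm_num)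
  exact my_step p (2045/1536) (4/3) (3927/5000) h9 hp2 (by norm_num) (by norm_num) (by norm_num) (by norm_num) (by norm_num)
end

section
/- Let K_p denote the smallest constant such that ∫_𝔻 |u(z)|^{2p} dA(z) ≤ K_p ( (1/2π) ∫_0^{2π} |u(e^{it})|^p dt )² holds for all functions u harmonic on the unit disk 𝔻 with L^p boundary values (u given as Poisson extension of an L^p(𝕋) function). Then K_p is non-increasing in p: if 1 < p < q then K_q ≤ K_p. -/
/-!
Given `f` with `|f|^q` integrable, put `g = |f|^(q/p)`, so that `∫ g^p = ∫ |f|^q`. Jensen's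
inequality for the Poisson kernel (a probability density) and the convex function `x ↦ x^(q/p)`
gives `|P[f]|^(q/p) ≤ P[g]`, hence `|P[f]|^(2q) ≤ P[g]^(2p)` on the disk. The `K_p`-bound cannot
be applied to `g` itself, since the area integral of `P[g]^(2p)` is not known to be finite; it is
applied to the bounded truncations `min g n`, and Fatou's lemma passes to the limit. Thus every admissible constant for `p` is
admissible for `q`.
-/

open Real MeasureTheory

/-- Poisson extension to the unit disk (in polar coordinates) of a boundary
function `f` on the circle, parametrized by arclength. -/
noncomputable def poissonExt (f : ℝ → ℝ) (r θ : ℝ) : ℝ :=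
  (1 / (2 * Real.pi)) *
    ∫ t in (0:ℝ)..(2 * Real.pi),
      ((1 - r ^ 2) / (1 - 2 * r * Real.cos (θ - t) + r ^ 2)) * f t

/-- `K` is an admissible constant for the isoperimetric inequality
`∫_𝔻 |u|^{2p} dA ≤ K (‖f‖_{L^p(𝕋)}^p)²` for harmonic `u = P[f]`,
where the area integral over the disk is written in polar coordinates with
normalized area measure. -/
def IsoBound (p K : ℝ) : Prop :=
  0 ≤ K ∧ ∀ f : ℝ → ℝ, Measurable f →
    IntervalIntegrable (fun t => |f t| ^ p) volume 0 (2 * Real.pi) →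
    (1 / Real.pi) *
        ∫ r in (0:ℝ)..1,
          (∫ θ in (0:ℝ)..(2 * Real.pi), |poissonExt f r θ| ^ (2 * p)) * r ≤
      K * ((1 / (2 * Real.pi)) * ∫ t in (0:ℝ)..(2 * Real.pi), |f t| ^ p) ^ 2

open Set Filter Topology
open scoped ENNReal

section Integral

variable {α : Type*} [MeasurableSpace α] {μ : Measure α}

lemma MeasureTheory.Integrable.abs_rpow_of_le [IsFiniteMeasure μ] {f : α → ℝ} (hf : AEStronglyMeasurable f μ)
    {a b : ℝ} (ha : 0 ≤ a) (hab : a ≤ b) (hb : Integrable (fun x => |f x| ^ b) μ) :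
    Integrable (fun x => |f x| ^ a) μ := by
  refine ((integrable_const 1).add hb).mono'
    (hf.norm.aemeasurable.pow_const a).aestronglyMeasurable (ae_of_all _ fun x => ?_)
  rw [Real.norm_of_nonneg (by positivity)]
  show |f x| ^ a ≤ 1 + |f x| ^ b
  rcases le_total |f x| 1 with h | h
  · linarith [rpow_le_one (abs_nonneg (f x)) h ha, rpow_nonneg (abs_nonneg (f x)) b]
  · linarith [rpow_le_rpow_of_exponent_le h hab]

lemma abs_integral_rpow_le [IsProbabilityMeasure μ] {f : α → ℝ} {s : ℝ} (hs : 1 ≤ s)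
    (hf : Integrable f μ) (hfs : Integrable (fun x => |f x| ^ s) μ) :
    |∫ x, f x ∂μ| ^ s ≤ ∫ x, |f x| ^ s ∂μ :=
  calc |∫ x, f x ∂μ| ^ s ≤ (∫ x, |f x| ∂μ) ^ s := by
        gcongr
        exact abs_integral_le_integral_abs
    _ ≤ ∫ x, |f x| ^ s ∂μ :=
        (convexOn_rpow hs).map_integral_le
          (continuousOn_id.rpow_const fun _ _ => Or.inr (by linarith)) isClosed_Ici
          (ae_of_all _ fun x => abs_nonneg (f x)) hf.abs hfs

lemma lintegral_lintegral_liminf_le {β : Type*} [MeasurableSpace β] {ν : Measure β} [SFinite ν]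
    {F : ℕ → α → β → ℝ≥0∞} (hF : ∀ n, Measurable (Function.uncurry (F n))) :
    ∫⁻ x, ∫⁻ y, liminf (fun n => F n x y) atTop ∂ν ∂μ ≤
      liminf (fun n => ∫⁻ x, ∫⁻ y, F n x y ∂ν ∂μ) atTop :=
  (lintegral_mono fun _ => lintegral_liminf_le fun n => (hF n).comp measurable_prodMk_left).trans
    (lintegral_liminf_le fun n => (hF n).lintegral_prod_right')

end Integral

section PoissonKernel

variable {r θ : ℝ}

lemma poissonKernel_circleMap (r θ t : ℝ) :
    poissonKernel 0 (circleMap 0 r θ) (circleMap 0 1 t) =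
      (1 - r ^ 2) / (1 - 2 * r * cos (θ - t) + r ^ 2) := by
  simp only [poissonKernel_def, sub_zero, norm_circleMap_zero, abs_one, sq_abs,
    ← Complex.normSq_eq_norm_sq, Complex.normSq_apply, Complex.sub_re, Complex.sub_im,
    circleMap_zero_re, circleMap_zero_im, cos_sub]
  congr 1
  · ring
  · linear_combination sin_sq_add_cos_sq t + r ^ 2 * sin_sq_add_cos_sq θ

lemma measurable_poissonKernel_circleMap (r θ : ℝ) :
    Measurable fun t => poissonKernel 0 (circleMap 0 r θ) (circleMap 0 1 t) := by
  simp_rw [poissonKernel_circleMap]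
  fun_prop

lemma circleMap_mem_ball_zero_one (hr : |r| < 1) : circleMap 0 r θ ∈ Metric.ball 0 1 := by
  simpa using hr

lemma integral_poissonKernel_circleMap (hr : |r| < 1) :
    ∫ t in (0:ℝ)..2 * π, poissonKernel 0 (circleMap 0 r θ) (circleMap 0 1 t) = 2 * π := by
  have h := (InnerProductSpace.harmonicOnNhd_const (1 : ℝ)
    (s := Metric.closedBall (0 : ℂ) 1)).circleAverage_poissonKernel_smul
      (circleMap_mem_ball_zero_one (θ := θ) hr)
  simp only [circleAverage_def, smul_eq_mul, Pi.mul_apply, mul_one] at h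
  field_simp at h
  exact h

lemma poissonKernel_circleMap_pos (hr : |r| < 1) (t : ℝ) :
    0 < poissonKernel 0 (circleMap 0 r θ) (circleMap 0 1 t) := by
  have h := le_re_herglotzRieszKernel (z := circleMap 0 1 t) (by simp)
    (circleMap_mem_ball_zero_one (θ := θ) hr)
  rw [poissonKernel_eq_re_herglotzRieszKernel]
  refine lt_of_lt_of_le ?_ h
  simp only [sub_zero, norm_circleMap_zero]
  have := abs_nonneg r
  apply div_pos <;> linarith

lemma poissonKernel_circleMap_le (hr : |r| < 1) (t : ℝ) :
    poissonKernel 0 (circleMap 0 r θ) (circleMap 0 1 t) ≤ (1 + |r|) / (1 - |r|) := by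
  have h := re_herglotzRieszKernel_le (z := circleMap 0 1 t) (by simp)
    (circleMap_mem_ball_zero_one (θ := θ) hr)
  rw [poissonKernel_eq_re_herglotzRieszKernel]
  simpa [herglotzRieszKernel_def] using h

end PoissonKernel

noncomputable def poissonMeasure (r θ : ℝ) : Measure ℝ :=
  (volume.restrict (Ioc 0 (2 * π))).withDensity fun t =>
    ENNReal.ofReal ((2 * π)⁻¹ * poissonKernel 0 (circleMap 0 r θ) (circleMap 0 1 t))

section PoissonMeasure

variable {r θ : ℝ}

lemma integral_poissonMeasure (hr : |r| < 1) (f : ℝ → ℝ) :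
    ∫ t, f t ∂poissonMeasure r θ = poissonExt f r θ := by
  rw [poissonMeasure, integral_withDensity_eq_integral_toReal_smul
    ((measurable_poissonKernel_circleMap r θ).const_mul _).ennreal_ofReal
    (ae_of_all _ fun _ => ENNReal.ofReal_lt_top), poissonExt,
    intervalIntegral.integral_of_le (by positivity), ← integral_const_mul]
  congr 1 with t
  rw [ENNReal.toReal_ofReal (by have := poissonKernel_circleMap_pos (θ := θ) hr t; positivity),
    poissonKernel_circleMap, smul_eq_mul]
  ring

lemma isProbabilityMeasure_poissonMeasure (hr : |r| < 1) :
    IsProbabilityMeasure (poissonMeasure r θ) := by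
  have hint := intervalIntegral.intervalIntegrable_of_integral_ne_zero
    ((integral_poissonKernel_circleMap (θ := θ) hr).trans_ne (by positivity))
  constructor
  rw [poissonMeasure, withDensity_apply _ MeasurableSet.univ, Measure.restrict_univ,
    ← ofReal_integral_eq_lintegral_ofReal, integral_const_mul,
    ← intervalIntegral.integral_of_le (by positivity), integral_poissonKernel_circleMap hr,
    inv_mul_cancel₀ (by positivity), ENNReal.ofReal_one]
  · exact ((intervalIntegrable_iff_integrableOn_Ioc_of_le (by positivity)).1 hint).const_mul _
  · exact ae_of_all _ fun t => (mul_pos (by positivity) (poissonKernel_circleMap_pos hr t)).le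

lemma poissonMeasure_le (hr : |r| < 1) :
    poissonMeasure r θ ≤
      ENNReal.ofReal ((2 * π)⁻¹ * ((1 + |r|) / (1 - |r|))) • volume.restrict (Ioc 0 (2 * π)) := by
  rw [← withDensity_const]
  refine withDensity_mono (ae_of_all _ fun t => ENNReal.ofReal_le_ofReal ?_)
  gcongr
  exact poissonKernel_circleMap_le hr t

lemma integrable_poissonMeasure (hr : |r| < 1) {f : ℝ → ℝ}
    (hf : IntegrableOn f (Ioc 0 (2 * π))) : Integrable f (poissonMeasure r θ) :=
  (hf.smul_measure ENNReal.ofReal_ne_top).mono_measure (poissonMeasure_le hr)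

lemma abs_poissonExt_rpow_le (hr : |r| < 1) {f : ℝ → ℝ} {s : ℝ} (hs : 1 ≤ s)
    (hf : IntegrableOn f (Ioc 0 (2 * π)))
    (hfs : IntegrableOn (fun t => |f t| ^ s) (Ioc 0 (2 * π))) :
    |poissonExt f r θ| ^ s ≤ poissonExt (fun t => |f t| ^ s) r θ := by
  have := isProbabilityMeasure_poissonMeasure (θ := θ) hr
  rw [← integral_poissonMeasure hr, ← integral_poissonMeasure hr]
  exact abs_integral_rpow_le hs (integrable_poissonMeasure hr hf) (integrable_poissonMeasure hr hfs)

lemma abs_poissonExt_le (hr : |r| < 1) {f : ℝ → ℝ} {M : ℝ} (hM : ∀ t, |f t| ≤ M) :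
    |poissonExt f r θ| ≤ M := by
  have := isProbabilityMeasure_poissonMeasure (θ := θ) hr
  rw [← integral_poissonMeasure hr]
  simpa using norm_integral_le_of_norm_le_const (μ := poissonMeasure r θ)
    (ae_of_all _ fun t => (Real.norm_eq_abs _).trans_le (hM t))

lemma tendsto_poissonExt_min (hr : |r| < 1) {g : ℝ → ℝ} (hg : IntegrableOn g (Ioc 0 (2 * π))) :
    Tendsto (fun n : ℕ => poissonExt (fun t => min (g t) n) r θ) atTop
      (𝓝 (poissonExt g r θ)) := by
  have hgμ := integrable_poissonMeasure (θ := θ) hr hg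
  simp_rw [← integral_poissonMeasure hr]
  refine tendsto_integral_of_dominated_convergence (fun t => |g t|)
    (fun n => (hgμ.aemeasurable.min aemeasurable_const).aestronglyMeasurable) hgμ.abs
    (fun n => ae_of_all _ fun t => ?_) (ae_of_all _ fun t => ?_)
  · rw [Real.norm_eq_abs, abs_le]
    constructor
    · exact le_min (neg_abs_le _) ((neg_nonpos.2 (abs_nonneg _)).trans n.cast_nonneg)
    · exact (min_le_left _ _).trans (le_abs_self _)
  · exact tendsto_atTop_of_eventually_const (i₀ := ⌈g t⌉₊) fun n hn =>
      min_eq_left ((Nat.le_ceil _).trans (Nat.cast_le.2 hn))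

end PoissonMeasure

lemma measurable_poissonExt {f : ℝ → ℝ} (hf : Measurable f) :
    Measurable (Function.uncurry (poissonExt f)) := by
  have : StronglyMeasurable fun z : (ℝ × ℝ) × ℝ =>
      (1 - z.1.1 ^ 2) / (1 - 2 * z.1.1 * cos (z.1.2 - z.2) + z.1.1 ^ 2) * f z.2 :=
    (by fun_prop : Measurable _).stronglyMeasurable
  change Measurable fun z : ℝ × ℝ => poissonExt f z.1 z.2
  simp only [poissonExt, intervalIntegral.integral_of_le (by positivity : (0:ℝ) ≤ 2 * π)]
  exact (this.integral_prod_right' (ν := volume.restrict (Ioc 0 (2 * π)))).measurable.const_mul _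

/-- The `ℝ≥0∞`-valued counterpart of the area integral in `IsoBound`: unlike the Bochner integral,
it does not collapse to `0` on non-integrable integrands, so Fatou's lemma applies to it. -/
noncomputable def polarLIntegral (u : ℝ → ℝ → ℝ) : ℝ≥0∞ :=
  ∫⁻ r in Ioo 0 1, ∫⁻ θ in Ioc 0 (2 * π), ‖u r θ * r‖ₑ

lemma integral_polar_le_of_polarLIntegral_le {u : ℝ → ℝ → ℝ} {B : ℝ} (hB : 0 ≤ B)
    (hu : polarLIntegral u ≤ ENNReal.ofReal B) :
    ∫ r in (0:ℝ)..1, (∫ θ in (0:ℝ)..2 * π, u r θ) * r ≤ B := by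
  have h : ‖∫ r in (0:ℝ)..1, (∫ θ in (0:ℝ)..2 * π, u r θ) * r‖ₑ ≤ polarLIntegral u := by
    rw [intervalIntegral.integral_of_le zero_le_one, integral_Ioc_eq_integral_Ioo]
    refine (enorm_integral_le_lintegral_enorm _).trans (lintegral_mono fun r => ?_)
    rw [← intervalIntegral.integral_mul_const, intervalIntegral.integral_of_le (by positivity)]
    exact enorm_integral_le_lintegral_enorm _
  rw [Real.enorm_eq_ofReal_abs] at h
  exact (le_abs_self _).trans ((ENNReal.ofReal_le_ofReal_iff hB).1 (h.trans hu))

lemma polarLIntegral_eq_ofReal {u : ℝ → ℝ → ℝ} (hu : Measurable (Function.uncurry u))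
    (hu0 : ∀ r θ, 0 ≤ u r θ) {M : ℝ} (huM : ∀ r ∈ Ioo (0:ℝ) 1, ∀ θ, u r θ ≤ M) :
    polarLIntegral u = ENNReal.ofReal (∫ r in (0:ℝ)..1, (∫ θ in (0:ℝ)..2 * π, u r θ) * r) := by
  have h2π : (0:ℝ) ≤ 2 * π := by positivity
  simp only [intervalIntegral.integral_of_le h2π, intervalIntegral.integral_of_le zero_le_one,
    integral_Ioc_eq_integral_Ioo (x := (0:ℝ)) (y := 1)]
  have hinner (r : ℝ) (hr : r ∈ Ioo (0:ℝ) 1) :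
      ∫⁻ θ in Ioc 0 (2 * π), ‖u r θ * r‖ₑ =
        ENNReal.ofReal ((∫ θ in Ioc 0 (2 * π), u r θ) * r) := by
    rw [← integral_mul_const, ofReal_integral_eq_lintegral_ofReal]
    · simp_rw [Real.enorm_of_nonneg (mul_nonneg (hu0 r _) hr.1.le)]
    · refine Integrable.of_bound
        ((hu.comp measurable_prodMk_left).mul_const r).aestronglyMeasurable M
        (ae_of_all _ fun θ => ?_)
      rw [Real.norm_of_nonneg (mul_nonneg (hu0 r θ) hr.1.le)]
      nlinarith [huM r hr θ, hu0 r θ, hr.2, hr.1]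
    · exact ae_of_all _ fun θ => mul_nonneg (hu0 r θ) hr.1.le
  have hmeas : Measurable fun r => ∫ θ in Ioc 0 (2 * π), u r θ :=
    (hu.stronglyMeasurable.integral_prod_right (ν := volume.restrict (Ioc 0 (2 * π)))).measurable
  rw [polarLIntegral, setLIntegral_congr_fun measurableSet_Ioo hinner,
    ofReal_integral_eq_lintegral_ofReal]
  · refine Integrable.of_bound (hmeas.mul measurable_id).aestronglyMeasurable (M * (2 * π))
      ((ae_restrict_iff' measurableSet_Ioo).2 (ae_of_all _ fun r hr => ?_))
    have h := norm_setIntegral_le_of_norm_le_const (μ := volume) (s := Ioc 0 (2 * π))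
      measure_Ioc_lt_top fun θ _ => (Real.norm_of_nonneg (hu0 r θ)).trans_le (huM r hr θ)
    rw [Real.volume_real_Ioc_of_le h2π, sub_zero] at h
    rw [norm_mul, Real.norm_of_nonneg hr.1.le]
    nlinarith [norm_nonneg (∫ θ in Ioc 0 (2 * π), u r θ), hr.1, hr.2]
  · exact (ae_restrict_iff' measurableSet_Ioo).2 (ae_of_all _ fun r hr =>
      mul_nonneg (setIntegral_nonneg measurableSet_Ioc fun θ _ => hu0 r θ) hr.1.le)

lemma enorm_poissonExt_rpow_mul_le_liminf {r θ : ℝ} (hr : r ∈ Ioo (0:ℝ) 1) {f : ℝ → ℝ}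
    {s e : ℝ} (hs : 1 ≤ s) (he : 0 ≤ e) (hf : IntegrableOn f (Ioc 0 (2 * π)))
    (hfs : IntegrableOn (fun t => |f t| ^ s) (Ioc 0 (2 * π))) :
    ‖|poissonExt f r θ| ^ (s * e) * r‖ₑ ≤
      liminf (fun n : ℕ => ‖|poissonExt (fun t => min (|f t| ^ s) n) r θ| ^ e * r‖ₑ) atTop := by
  have hr1 : |r| < 1 := abs_lt.2 ⟨by linarith [hr.1], hr.2⟩
  have hlim : Tendsto (fun n : ℕ => ‖|poissonExt (fun t => min (|f t| ^ s) n) r θ| ^ e * r‖ₑ)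
      atTop (𝓝 ‖|poissonExt (fun t => |f t| ^ s) r θ| ^ e * r‖ₑ) :=
    (continuous_enorm.tendsto _).comp
      (((tendsto_poissonExt_min hr1 hfs).abs.rpow_const (Or.inr he)).mul_const r)
  rw [hlim.liminf_eq, Real.enorm_of_nonneg (mul_nonneg (by positivity) hr.1.le),
    Real.enorm_of_nonneg (mul_nonneg (by positivity) hr.1.le)]
  refine ENNReal.ofReal_le_ofReal (mul_le_mul_of_nonneg_right ?_ hr.1.le)
  rw [rpow_mul (abs_nonneg _)]
  gcongr
  exact (abs_poissonExt_rpow_le hr1 hs hf hfs).trans (le_abs_self _)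

lemma IsoBound.polarLIntegral_min_le {p K : ℝ} (hK : IsoBound p K) (hp : 0 < p) {g : ℝ → ℝ}
    (hg : Measurable g) (hg0 : ∀ t, 0 ≤ g t)
    (hgp : IntervalIntegrable (fun t => g t ^ p) volume 0 (2 * π)) (n : ℕ) :
    polarLIntegral (fun r θ => |poissonExt (fun t => min (g t) n) r θ| ^ (2 * p)) ≤
      ENNReal.ofReal (π * (K * ((1 / (2 * π)) * ∫ t in (0:ℝ)..2 * π, g t ^ p) ^ 2)) := by
  set h : ℝ → ℝ := fun t => min (g t) n
  have hh : Measurable h := hg.min measurable_const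
  have habs (t : ℝ) : |h t| = h t := abs_of_nonneg (le_min (hg0 t) n.cast_nonneg)
  have hle (t : ℝ) : |h t| ^ p ≤ g t ^ p := by
    rw [habs]
    exact rpow_le_rpow (le_min (hg0 t) n.cast_nonneg) (min_le_left _ _) hp.le
  have hhp : IntervalIntegrable (fun t => |h t| ^ p) volume 0 (2 * π) :=
    hgp.mono_fun' (hh.abs.pow_const p).aestronglyMeasurable
      (ae_of_all _ fun t => (Real.norm_of_nonneg (by positivity)).trans_le (hle t))
  have hmeas : Measurable (Function.uncurry fun r θ => |poissonExt h r θ| ^ (2 * p)) :=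
    (measurable_poissonExt hh).abs.pow_const _
  have hbdd (r : ℝ) (hr : r ∈ Ioo (0:ℝ) 1) (θ : ℝ) :
      |poissonExt h r θ| ^ (2 * p) ≤ (n:ℝ) ^ (2 * p) :=
    rpow_le_rpow (abs_nonneg _) (abs_poissonExt_le (abs_lt.2 ⟨by linarith [hr.1], hr.2⟩)
      fun t => (habs t).trans_le (min_le_right _ _)) (by positivity)
  rw [polarLIntegral_eq_ofReal hmeas (fun _ _ => by positivity) hbdd]
  refine ENNReal.ofReal_le_ofReal ?_
  have hbound := hK.2 h hh hhp
  rw [one_div_mul_eq_div, div_le_iff₀ pi_pos] at hbound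
  have hmean : (1 / (2 * π)) * ∫ t in (0:ℝ)..2 * π, |h t| ^ p ≤
      (1 / (2 * π)) * ∫ t in (0:ℝ)..2 * π, g t ^ p := by
    gcongr
    exact intervalIntegral.integral_mono_on (by positivity) hhp hgp fun t _ => hle t
  have hmean0 : 0 ≤ (1 / (2 * π)) * ∫ t in (0:ℝ)..2 * π, |h t| ^ p :=
    mul_nonneg (by positivity)
      (intervalIntegral.integral_nonneg (by positivity) fun t _ => by positivity)
  have hK0 := hK.1
  calc _ ≤ K * ((1 / (2 * π)) * ∫ t in (0:ℝ)..2 * π, |h t| ^ p) ^ 2 * π := hbound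
    _ ≤ K * ((1 / (2 * π)) * ∫ t in (0:ℝ)..2 * π, g t ^ p) ^ 2 * π := by gcongr
    _ = _ := by ring

theorem IsoBound.mono {p q K : ℝ} (hp : 1 ≤ p) (hpq : p ≤ q) (hK : IsoBound p K) :
    IsoBound q K := by
  refine ⟨hK.1, fun f hf hfq => ?_⟩
  have hp0 : 0 < p := by linarith
  have hs : 1 ≤ q / p := (one_le_div hp0).2 hpq
  set g : ℝ → ℝ := fun t => |f t| ^ (q / p)
  have hgp : (fun t => g t ^ p) = fun t => |f t| ^ q := by
    funext t
    rw [← rpow_mul (abs_nonneg _), div_mul_cancel₀ q hp0.ne']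
  have hfq' := (intervalIntegrable_iff_integrableOn_Ioc_of_le (by positivity)).1 hfq
  have hf1 : IntegrableOn f (Ioc 0 (2 * π)) := by
    refine (integrable_norm_iff hf.aestronglyMeasurable).1 ?_
    simpa using Integrable.abs_rpow_of_le hf.aestronglyMeasurable zero_le_one (by linarith) hfq'
  have hg : IntegrableOn g (Ioc 0 (2 * π)) := Integrable.abs_rpow_of_le
    hf.aestronglyMeasurable (by linarith) (div_le_self (by linarith) hp) hfq'
  have hg_meas : Measurable g := hf.abs.pow_const _
  have hbound (n : ℕ) := hK.polarLIntegral_min_le hp0 hg_meas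
    (fun t => rpow_nonneg (abs_nonneg _) _) (hgp ▸ hfq) n
  rw [hgp] at hbound
  have h2q : 2 * q = q / p * (2 * p) := by field_simp
  have hL : polarLIntegral (fun r θ => |poissonExt f r θ| ^ (2 * q)) ≤
      ENNReal.ofReal (π * (K * ((1 / (2 * π)) * ∫ t in (0:ℝ)..2 * π, |f t| ^ q) ^ 2)) :=
    calc _ ≤ ∫⁻ r in Ioo 0 1, ∫⁻ θ in Ioc 0 (2 * π),
          liminf (fun n : ℕ => ‖|poissonExt (fun t => min (g t) n) r θ| ^ (2 * p) * r‖ₑ) atTop :=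
          setLIntegral_mono' measurableSet_Ioo fun r hr => lintegral_mono fun θ => by
            rw [h2q]
            exact enorm_poissonExt_rpow_mul_le_liminf hr hs (by positivity) hf1 hg
      _ ≤ liminf (fun n : ℕ =>
            polarLIntegral fun r θ => |poissonExt (fun t => min (g t) n) r θ| ^ (2 * p)) atTop :=
          lintegral_lintegral_liminf_le fun n =>
            (((measurable_poissonExt (hg_meas.min measurable_const)).abs.pow_const _).mul
              measurable_fst).enorm
      _ ≤ _ := liminf_le_of_frequently_le' (Frequently.of_forall hbound)
  rw [one_div_mul_eq_div, div_le_iff₀ pi_pos]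
  linarith [integral_polar_le_of_polarLIntegral_le (by have := hK.1; positivity) hL]

theorem stmt_19_general (p q : ℝ) (hp : 1 < p) (hpq : p < q)
    (hKp : {K : ℝ | IsoBound p K}.Nonempty) :
    sInf {K : ℝ | IsoBound q K} ≤ sInf {K : ℝ | IsoBound p K} :=
  csInf_le_csInf ⟨0, fun _ hK => hK.1⟩ hKp fun _ hK => hK.mono hp.le hpq.le

theorem stmt_19 (p q : ℝ) (hp : 1 < p) (hpq : p < q)
    (hKp : {K : ℝ | IsoBound p K}.Nonempty)
    (hKq : {K : ℝ | IsoBound q K}.Nonempty) :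
    sInf {K : ℝ | IsoBound q K} ≤ sInf {K : ℝ | IsoBound p K} :=
  stmt_19_general p q hp hpq hKp
end
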